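/- arXiv:1501.06051 — 18 statements merged into one kernel-verified Lean document; each statement's English description precedes it below -/
import Mathlib

section
/- Let α ≥ 0 and f, n, k ≥ 1 be integers with 2·f = 2^α·n·k, and set D = f² + 2^α·n. Assume D is not a perfect square. Then the simple continued fraction expansion of √D is [f; k, 2f, k, 2f, …]; that is, a₀ = ⌊√D⌋ = f and the partial quotients satisfy a_{2i+1} = k and a_{2i+2} = 2f for every integer i ≥ 0. -/
/-- The sequence of complete quotients of the simple continued fraction
expansion of `x`: `x₀ = x`, `x_{i+1} = 1/(x_i - ⌊x_i⌋)`. -/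
noncomputable def cfX (x : ℝ) : ℕ → ℝ
  | 0 => x
  | i + 1 => 1 / Int.fract (cfX x i)

/-- The partial quotients of the simple continued fraction expansion of `x`:
`a_i = ⌊x_i⌋`. -/
noncomputable def cfA (x : ℝ) (i : ℕ) : ℤ := ⌊cfX x i⌋

theorem stmt0 (α : ℕ) (f n k : ℤ) (hf : 1 ≤ f) (hn : 1 ≤ n) (hk : 1 ≤ k)
    (hdiv : 2 * f = 2 ^ α * n * k) (D : ℤ) (hD : D = f ^ 2 + 2 ^ α * n)
    (hns : ¬ IsSquare D) :
    cfA (Real.sqrt D) 0 = f ∧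
      ∀ i : ℕ, cfA (Real.sqrt D) (2 * i + 1) = k ∧
        cfA (Real.sqrt D) (2 * i + 2) = 2 * f := by
  have ht1 : (1:ℤ) ≤ 2 ^ α * n := by
    have : (0:ℤ) < 2 ^ α * n := by positivity
    exact this
  set t : ℝ := ((2:ℝ) ^ α * n) with ht
  have htr : (1:ℝ) ≤ t := by
    have hcast : ((2 ^ α * n : ℤ) : ℝ) = t := by rw [ht]; push_cast; ring
    rw [← hcast]; exact_mod_cast ht1
  have htpos : (0:ℝ) < t := by linarith
  have hfr : (1:ℝ) ≤ (f:ℝ) := by exact_mod_cast hf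
  have hkr : (1:ℝ) ≤ (k:ℝ) := by exact_mod_cast hk
  have h2f : t * k = 2 * f := by
    have hcast : ((2 ^ α * n * k : ℤ) : ℝ) = t * k := by rw [ht]; push_cast; ring
    rw [← hcast]
    exact_mod_cast hdiv.symm
  have htle : t ≤ 2 * f := by nlinarith
  have hDpos : (0:ℤ) ≤ D := by nlinarith
  set s : ℝ := Real.sqrt D with hs
  have hs2 : s ^ 2 = (D:ℝ) := Real.sq_sqrt (by exact_mod_cast hDpos)
  have hDr : (D:ℝ) = (f:ℝ) ^ 2 + t := by rw [hD]; push_cast; ring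
  have hsnn : 0 ≤ s := Real.sqrt_nonneg _
  have hlow : (f:ℝ) < s := by nlinarith
  have hup : s < (f:ℝ) + 1 := by nlinarith
  have hprod : (s - f) * (s + f) = t := by nlinarith
  have hsfpos : 0 < s - f := by linarith
  have ha0 : ⌊s⌋ = f := by
    rw [Int.floor_eq_iff]
    constructor
    · exact hlow.le
    · push_cast; linarith
  have hfr0 : Int.fract s = s - f := by rw [Int.fract, ha0]
  have hx1 : cfX s 1 = (s + f) / t := by
    show 1 / Int.fract (cfX s 0) = _
    show 1 / Int.fract s = _
    rw [hfr0, div_eq_div_iff (by linarith) htpos.ne']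
    linarith [hprod]
  have ha1 : ⌊(s + f) / t⌋ = k := by
    rw [Int.floor_eq_iff]
    constructor
    · rw [le_div_iff₀ htpos]; nlinarith
    · rw [div_lt_iff₀ htpos]; push_cast; nlinarith
  have hfr1 : Int.fract ((s + f) / t) = (s - f) / t := by
    rw [Int.fract, ha1]
    field_simp
    linarith [h2f]
  have ha2 : ⌊s + (f:ℝ)⌋ = 2 * f := by
    rw [Int.floor_eq_iff]
    constructor
    · push_cast; linarith
    · push_cast; linarith
  have hfr2 : Int.fract (s + (f:ℝ)) = s - f := by
    rw [Int.fract, ha2]; push_cast; ring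
  have hnext : 1 / ((s - f) / t) = s + f := by
    rw [div_div_eq_mul_div, one_mul, div_eq_iff (by linarith)]
    linarith [hprod]
  have key : ∀ i : ℕ, cfX s (2 * i + 1) = (s + f) / t ∧ cfX s (2 * i + 2) = s + f := by
    intro i
    induction i with
    | zero =>
      refine ⟨hx1, ?_⟩
      show 1 / Int.fract (cfX s 1) = _
      rw [hx1, hfr1, hnext]
    | succ j ih =>
      have h1 : cfX s (2 * (j + 1) + 1) = (s + f) / t := by
        show 1 / Int.fract (cfX s (2 * j + 2)) = _
        rw [ih.2, hfr2]
        rw [div_eq_div_iff (by linarith) htpos.ne']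
        linarith [hprod]
      refine ⟨h1, ?_⟩
      show 1 / Int.fract (cfX s (2 * (j + 1) + 1)) = _
      rw [h1, hfr1, hnext]
  refine ⟨ha0, fun i => ?_⟩
  constructor
  · show ⌊cfX s (2 * i + 1)⌋ = k
    rw [(key i).1, ha1]
  · show ⌊cfX s (2 * i + 2)⌋ = 2 * f
    rw [(key i).2, ha2]
end

section
/- Let α ≥ 0 and f, n, k ≥ 1 be integers with 2·f = 2^α·n·k, and set D = f² + 2^α·n. Assume D is not a perfect square. Then (X, Y) = (f·k + 1, k) is the fundamental solution of the Pell equation X² − D·Y² = 1; that is, (f·k+1)² − D·k² = 1 and every pair of positive integers (x, y) with x² − D·y² = 1 satisfies k ≤ y. -/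
theorem stmt1 (α : ℕ) (f n k : ℤ) (hf : 1 ≤ f) (hn : 1 ≤ n) (hk : 1 ≤ k)
    (hdiv : 2 * f = 2 ^ α * n * k) (D : ℤ) (hD : D = f ^ 2 + 2 ^ α * n)
    (hns : ¬ IsSquare D) :
    (f * k + 1) ^ 2 - D * k ^ 2 = 1 ∧
      ∀ x y : ℤ, 0 < x → 0 < y → x ^ 2 - D * y ^ 2 = 1 → k ≤ y := by
  subst hD
  have hm : (0:ℤ) < 2 ^ α * n := by positivity
  constructor
  · linear_combination k * hdiv
  · intro x y hx hy hxy
    by_contra hlt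
    push_neg at hlt
    have hr : 1 ≤ x - f * y := by
      nlinarith [mul_pos (lt_of_lt_of_le one_pos hf) hy, mul_pos hm (mul_pos hy hy)]
    have hid : (x - f*y)^2 - 1 = (2 ^ α * n) * y * (y - k * (x - f*y)) := by
      linear_combination hxy + (f*y^2 - x*y) * hdiv
    nlinarith [mul_pos hm hy, mul_le_mul_of_nonneg_left hr (le_of_lt (lt_of_lt_of_le one_pos hk)),
      sq_nonneg (x - f*y - 1), sq_nonneg (x - f*y + 1)]
end

section
/- Let α ≥ 0 and f, n ≥ 1, k ≥ 3 be integers with 2·f = 2^α·n·k, not both α = 0 and n = 1, and set D = f² − 2^α·n. Assume D is not a perfect square. Then the simple continued fraction expansion of √D is [f−1; 1, k−2, 1, 2(f−1), 1, k−2, 1, 2(f−1), …]; that is, a₀ = ⌊√D⌋ = f−1 and for every integer i ≥ 0 the partial quotients satisfy a_{4i+1} = 1, a_{4i+2} = k−2, a_{4i+3} = 1, a_{4i+4} = 2(f−1). -/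
/-!
With `m = 2 ^ α * n` and `s = √D`, so that `s ^ 2 = f ^ 2 - m`, the complete quotients are quadratic
surds `(s + P) / Q`, and the usual recursion `P' = a Q - P`, `Q Q' = D - P' ^ 2` runs through
`(P, Q) = (f - 1, 2f - 1 - m), (f - m, m), (f - m, 2f - 1 - m), (f - 1, 1)` and back. Since
`2f = mk` with `k ≥ 3` and `m ≥ 2`, we have `f - 1 < s < f` and `3m ≤ 2f`, which pins down each
floor.
-/

lemma cfX_add (x : ℝ) (i j : ℕ) : cfX x (i + j) = cfX (cfX x i) j := by
  induction j with
  | zero => rfl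
  | succ j ih => rw [← add_assoc, cfX, cfX, ih]

lemma cfX_add_mul_of_periodic {x : ℝ} {j p : ℕ} (h : cfX x (j + p) = cfX x j) (i : ℕ) :
    cfX x (j + p * i) = cfX x j := by
  induction i with
  | zero => rfl
  | succ i ih => rw [mul_add_one, ← add_assoc, cfX_add, ih, ← cfX_add, h]

lemma cfA_add_mul_of_periodic {x : ℝ} {j p : ℕ} (h : cfX x (j + p) = cfX x j) (i r : ℕ) :
    cfA x (j + p * i + r) = cfA x (j + r) := by
  rw [cfA, cfA, cfX_add x (j + p * i), cfX_add_mul_of_periodic h, ← cfX_add]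

/-- `(s + P) / Q - a = (s - P') / Q`, and its inverse is rationalised by `(s - P') (s + P') = Q Q'`.
-/
lemma cfA_eq_and_cfX_succ_eq {x s P Q P' Q' : ℝ} {a : ℤ} {i : ℕ}
    (hx : cfX x i = (s + P) / Q) (hQ : 0 < Q) (hlo : a * Q ≤ s + P) (hhi : s + P < (a + 1) * Q)
    (hP' : P' = a * Q - P) (hQ' : Q * Q' = s ^ 2 - P' ^ 2) (hQ'0 : Q' ≠ 0) :
    cfA x i = a ∧ cfX x (i + 1) = (s + P') / Q' := by
  have hfloor : cfA x i = a := by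
    rw [cfA, hx, Int.floor_eq_iff, le_div_iff₀ hQ, div_lt_iff₀ hQ]
    exact ⟨hlo, hhi⟩
  refine ⟨hfloor, ?_⟩
  subst hP'
  have hsP : s + P - Q * a ≠ 0 := by
    intro h
    have : Q * Q' = 0 := by rw [hQ']; linear_combination (s + (a * Q - P)) * h
    exact mul_ne_zero hQ.ne' hQ'0 this
  rw [cfX, Int.fract, ← cfA, hfloor, hx, div_sub' hQ.ne', one_div_div, div_eq_div_iff hsP hQ'0]
  linear_combination hQ'

lemma two_le_two_pow_mul {α : ℕ} {n : ℤ} (hn : 1 ≤ n) (hnot : ¬ (α = 0 ∧ n = 1)) :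
    2 ≤ 2 ^ α * n := by
  rcases Nat.eq_zero_or_pos α with rfl | hα
  · omega
  · calc (2 : ℤ) = 2 ^ 1 * 1 := by norm_num
      _ ≤ 2 ^ α * n := by gcongr <;> omega

lemma cfA_cycle_of_sq_eq_sq_sub {s : ℝ} {f m k : ℤ} (hs : s ^ 2 = f ^ 2 - m) (hs0 : 0 ≤ s)
    (hm : 2 ≤ m) (hk : 3 ≤ k) (hfmk : 2 * f = m * k) :
    cfA s 0 = f - 1 ∧ cfA s 1 = 1 ∧ cfA s 2 = k - 2 ∧ cfA s 3 = 1 ∧ cfA s 4 = 2 * (f - 1) ∧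
      cfX s 5 = cfX s 1 := by
  have hmR : (2 : ℝ) ≤ m := by exact_mod_cast hm
  have hkR : (3 : ℝ) ≤ k := by exact_mod_cast hk
  have hfmkR : 2 * (f : ℝ) = m * k := by exact_mod_cast hfmk
  have h3m : 3 * (m : ℝ) ≤ 2 * f := by nlinarith
  have hQ : (0 : ℝ) < 2 * f - 1 - m := by linarith
  have hlt : s < f := by nlinarith
  have hgt : (f : ℝ) - 1 < s := by nlinarith
  obtain ⟨h0, hx1⟩ := cfA_eq_and_cfX_succ_eq (x := s) (s := s) (i := 0) (a := f - 1)
    (P := 0) (Q := 1) (P' := f - 1) (Q' := 2 * f - 1 - m) (by simp [cfX]) one_pos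
    (by push_cast; linarith) (by push_cast; linarith) (by push_cast; ring) (by rw [hs]; ring) hQ.ne'
  obtain ⟨h1, hx2⟩ := cfA_eq_and_cfX_succ_eq (a := 1) (P' := f - m) (Q' := m) hx1 hQ
    (by push_cast; linarith) (by push_cast; linarith) (by push_cast; ring) (by rw [hs]; ring)
    (by positivity)
  obtain ⟨h2, hx3⟩ := cfA_eq_and_cfX_succ_eq (a := k - 2) (P' := f - m) (Q' := 2 * f - 1 - m) hx2
    (by positivity) (by push_cast; linarith) (by push_cast; linarith) (by push_cast; linarith)
    (by rw [hs]; ring) hQ.ne'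
  obtain ⟨h3, hx4⟩ := cfA_eq_and_cfX_succ_eq (a := 1) (P' := f - 1) (Q' := 1) hx3 hQ
    (by push_cast; linarith) (by push_cast; linarith) (by push_cast; ring) (by rw [hs]; ring)
    one_ne_zero
  obtain ⟨h4, hx5⟩ := cfA_eq_and_cfX_succ_eq (a := 2 * (f - 1)) (P' := f - 1)
    (Q' := 2 * f - 1 - m) hx4 one_pos (by push_cast; linarith) (by push_cast; linarith)
    (by push_cast; ring) (by rw [hs]; ring) hQ.ne'
  exact ⟨h0, h1, h2, h3, h4, hx5.trans hx1.symm⟩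

theorem stmt2_general (α : ℕ) (f n k : ℤ) (hn : 1 ≤ n) (hk : 3 ≤ k)
    (hdiv : 2 * f = 2 ^ α * n * k) (hnot : ¬ (α = 0 ∧ n = 1))
    (D : ℤ) (hD : D = f ^ 2 - 2 ^ α * n) :
    cfA (Real.sqrt D) 0 = f - 1 ∧
      ∀ i : ℕ, cfA (Real.sqrt D) (4 * i + 1) = 1 ∧
        cfA (Real.sqrt D) (4 * i + 2) = k - 2 ∧
        cfA (Real.sqrt D) (4 * i + 3) = 1 ∧
        cfA (Real.sqrt D) (4 * i + 4) = 2 * (f - 1) := by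
  have hm := two_le_two_pow_mul hn hnot
  have hD0 : (0 : ℝ) ≤ D := by
    have h3m : 3 * (2 ^ α * n) ≤ 2 * f := by rw [hdiv]; nlinarith
    rw [hD]; exact_mod_cast (by nlinarith : (0 : ℤ) ≤ f ^ 2 - 2 ^ α * n)
  have hs : Real.sqrt D ^ 2 = (f : ℝ) ^ 2 - ((2 ^ α * n : ℤ) : ℝ) := by
    rw [Real.sq_sqrt hD0, hD]; push_cast; ring
  obtain ⟨h0, h1, h2, h3, h4, hper⟩ := cfA_cycle_of_sq_eq_sq_sub hs (Real.sqrt_nonneg _) hm hk hdiv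
  refine ⟨h0, fun i => ?_⟩
  have hcycle (r : ℕ) : cfA (Real.sqrt D) (4 * i + (r + 1)) = cfA (Real.sqrt D) (1 + r) := by
    rw [← cfA_add_mul_of_periodic (j := 1) (p := 4) hper i r]; ring_nf
  exact ⟨by simpa [h1] using hcycle 0, by simpa [h2] using hcycle 1, by simpa [h3] using hcycle 2,
    by simpa [h4] using hcycle 3⟩

theorem stmt2 (α : ℕ) (f n k : ℤ) (hf : 1 ≤ f) (hn : 1 ≤ n) (hk : 3 ≤ k)
    (hdiv : 2 * f = 2 ^ α * n * k) (hnot : ¬ (α = 0 ∧ n = 1))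
    (D : ℤ) (hD : D = f ^ 2 - 2 ^ α * n) (hns : ¬ IsSquare D) :
    cfA (Real.sqrt D) 0 = f - 1 ∧
      ∀ i : ℕ, cfA (Real.sqrt D) (4 * i + 1) = 1 ∧
        cfA (Real.sqrt D) (4 * i + 2) = k - 2 ∧
        cfA (Real.sqrt D) (4 * i + 3) = 1 ∧
        cfA (Real.sqrt D) (4 * i + 4) = 2 * (f - 1) :=
  stmt2_general α f n k hn hk hdiv hnot D hD
end

section
/- Let α ≥ 0 and f, n ≥ 1, k ≥ 3 be integers with 2·f = 2^α·n·k, not both α = 0 and n = 1, and set D = f² − 2^α·n. Assume D is not a perfect square. Then (X, Y) = (f·k − 1, k) is the fundamental solution of the Pell equation X² − D·Y² = 1; that is, (f·k−1)² − D·k² = 1 and every pair of positive integers (x, y) with x² − D·y² = 1 satisfies k ≤ y. -/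
theorem stmt3 (α : ℕ) (f n k : ℤ) (hf : 1 ≤ f) (hn : 1 ≤ n) (hk : 3 ≤ k)
    (hdiv : 2 * f = 2 ^ α * n * k) (hnot : ¬ (α = 0 ∧ n = 1))
    (D : ℤ) (hD : D = f ^ 2 - 2 ^ α * n) (hns : ¬ IsSquare D) :
    (f * k - 1) ^ 2 - D * k ^ 2 = 1 ∧
      ∀ x y : ℤ, 0 < x → 0 < y → x ^ 2 - D * y ^ 2 = 1 → k ≤ y := by
  set m : ℤ := 2 ^ α * n with hm
  have hm2 : 2 ≤ m := by
    rcases Nat.eq_zero_or_pos α with h0 | h0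
    · have hn2 : 2 ≤ n := by
        rcases lt_or_ge n 2 with h | h
        · exact absurd ⟨h0, by omega⟩ hnot
        · exact h
      simp [hm, h0]; linarith
    · have h2 : (2:ℤ) ≤ 2 ^ α := by
        calc (2:ℤ) = 2 ^ 1 := by ring
        _ ≤ 2 ^ α := pow_le_pow_right₀ (by norm_num) h0
      nlinarith
  subst hD
  constructor
  · linear_combination (-k) * hdiv
  · intro x y hx hy hxy
    by_contra h
    push_neg at h
    have hy1 : 1 ≤ y := hy
    have hyk : y ≤ k - 1 := by omega
    have key : x ^ 2 - (f * y - 1) ^ 2 = m * y * (k - y) := by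
      linear_combination hxy + y * hdiv
    have hA : (f * y - 1) ^ 2 < x ^ 2 := by nlinarith [mul_pos (mul_pos (by linarith : (0:ℤ) < m) hy) (by omega : (0:ℤ) < k - y)]
    have hB : x ^ 2 < (f * y) ^ 2 := by nlinarith
    have h1 : x < f * y := lt_of_pow_lt_pow_left₀ 2 (by nlinarith) hB
    have h2 : f * y - 1 < x := lt_of_pow_lt_pow_left₀ 2 (le_of_lt hx) hA
    omega
end

section
/- Let α ≥ 0 and f, n ≥ 1 be integers, let m ≥ 3 be an odd integer, assume 4·f = 2^α·m·n, that f is even with f ≥ 4, and set D = f² + 2^α·n. Assume D is not a perfect square. Then the simple continued fraction expansion of √D is periodic with a₀ = ⌊√D⌋ = f and period of length 8: for every integer i ≥ 0, a_{8i+1} = (m−1)/2, a_{8i+2} = 1, a_{8i+3} = 1, a_{8i+4} = (f−2)/2, a_{8i+5} = 1, a_{8i+6} = 1, a_{8i+7} = (m−1)/2, a_{8i+8} = 2f. -/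
set_option maxHeartbeats 2000000 in
lemma cf_step (D p q a p' q' : ℤ) (hq : 0 < q) (hns : ¬ IsSquare D)
    (hpd : p' = a * q - p) (hE : q * q' = D - p' ^ 2)
    (hp0 : 0 ≤ p') (hle : p' ^ 2 ≤ D) (hub : D < (p' + q) ^ 2) :
    ⌊(Real.sqrt D + (p : ℝ)) / (q : ℝ)⌋ = a ∧
      1 / Int.fract ((Real.sqrt D + (p : ℝ)) / (q : ℝ))
        = (Real.sqrt D + (p' : ℝ)) / (q' : ℝ) := by
  have hlt : p' ^ 2 < D := lt_of_le_of_ne hle (fun hc => hns ⟨p', by rw [← hc]; ring⟩)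
  have hD0 : (0:ℤ) ≤ D := le_trans (sq_nonneg p') hle
  set s := Real.sqrt (D:ℝ) with hs
  have hs2 : s ^ 2 = (D:ℝ) := Real.sq_sqrt (by exact_mod_cast hD0)
  have hqR : (0:ℝ) < (q:ℝ) := by exact_mod_cast hq
  have hps : (p':ℝ) < s := by
    rw [hs, Real.lt_sqrt (by exact_mod_cast hp0)]
    exact_mod_cast hlt
  have hp0R : (0:ℝ) ≤ (p':ℝ) := by exact_mod_cast hp0
  have hsu : s < (p':ℝ) + (q:ℝ) := by
    rw [hs, Real.sqrt_lt' (by linarith)]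
    push_cast
    exact_mod_cast hub
  have hpdR : (p':ℝ) = (a:ℝ) * q - p := by exact_mod_cast hpd
  have hq'0 : 0 < q' := by
    by_contra hcon
    push_neg at hcon
    nlinarith [mul_nonpos_of_nonneg_of_nonpos (le_of_lt hq) hcon]
  have hfl : ⌊(s + (p:ℝ)) / (q:ℝ)⌋ = a := by
    rw [Int.floor_eq_iff]
    constructor
    · rw [le_div_iff₀ hqR]; linarith
    · rw [div_lt_iff₀ hqR]; push_cast; linarith
  refine ⟨hfl, ?_⟩
  have hfr : Int.fract ((s + (p:ℝ)) / (q:ℝ)) = (s - (p':ℝ)) / (q:ℝ) := by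
    rw [Int.fract, hfl]
    field_simp
    linarith
  rw [hfr, one_div_div]
  rw [div_eq_div_iff (by linarith) (by exact_mod_cast ne_of_gt hq'0)]
  have hER : (q:ℝ) * (q':ℝ) = (D:ℝ) - (p':ℝ)^2 := by exact_mod_cast hE
  linear_combination hER - hs2

set_option maxHeartbeats 2000000 in
lemma cf_cycle (f h k m e : ℤ) (hh : 1 ≤ h) (hm3 : 3 ≤ m) (hf4 : 4 ≤ f)
    (hfm : f = h * m) (hmk : m = 2 * k + 1) (hfe : f = 2 * e)
    (hns : ¬ IsSquare (f ^ 2 + 4 * h)) (j : ℕ)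
    (hXj : cfX (Real.sqrt ((f ^ 2 + 4 * h : ℤ) : ℝ)) j
      = (Real.sqrt ((f ^ 2 + 4 * h : ℤ) : ℝ) + ((f : ℤ) : ℝ)) / ((4 * h : ℤ) : ℝ)) :
    (cfA (Real.sqrt ((f ^ 2 + 4 * h : ℤ) : ℝ)) j = k ∧
     cfA (Real.sqrt ((f ^ 2 + 4 * h : ℤ) : ℝ)) (j + 1) = 1 ∧
     cfA (Real.sqrt ((f ^ 2 + 4 * h : ℤ) : ℝ)) (j + 2) = 1 ∧
     cfA (Real.sqrt ((f ^ 2 + 4 * h : ℤ) : ℝ)) (j + 3) = e - 1 ∧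
     cfA (Real.sqrt ((f ^ 2 + 4 * h : ℤ) : ℝ)) (j + 4) = 1 ∧
     cfA (Real.sqrt ((f ^ 2 + 4 * h : ℤ) : ℝ)) (j + 5) = 1 ∧
     cfA (Real.sqrt ((f ^ 2 + 4 * h : ℤ) : ℝ)) (j + 6) = k ∧
     cfA (Real.sqrt ((f ^ 2 + 4 * h : ℤ) : ℝ)) (j + 7) = 2 * f) ∧
    cfX (Real.sqrt ((f ^ 2 + 4 * h : ℤ) : ℝ)) (j + 8)
      = (Real.sqrt ((f ^ 2 + 4 * h : ℤ) : ℝ) + ((f : ℤ) : ℝ)) / ((4 * h : ℤ) : ℝ) := by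
  set D : ℤ := f ^ 2 + 4 * h with hD4
  set s : ℝ := Real.sqrt (D : ℝ) with hs
  have hf3 : 3 * h ≤ f := by nlinarith [mul_le_mul_of_nonneg_left hm3 (show (0:ℤ) ≤ h by linarith)]
  -- step at j : (f, 4h) → (f-2h, f+1-h), a = k
  obtain ⟨hA0, hN0⟩ := cf_step D f (4*h) k (f-2*h) (f+1-h) (by linarith) hns
    (by rw [hfm, hmk]; ring) (by rw [hD4]; ring) (by linarith)
    (by rw [hD4]; nlinarith) (by rw [hD4]; nlinarith)
  have hX1 : cfX s (j+1) = (s + ((f-2*h : ℤ) : ℝ)) / ((f+1-h : ℤ) : ℝ) := by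
    show 1 / Int.fract (cfX s j) = _
    rw [hXj]; exact hN0
  -- step at j+1 : (f-2h, f+1-h) → (h+1, f+h-1), a = 1
  obtain ⟨hA1, hN1⟩ := cf_step D (f-2*h) (f+1-h) 1 (h+1) (f+h-1) (by linarith) hns
    (by ring) (by rw [hD4]; ring) (by linarith)
    (by rw [hD4]; nlinarith) (by rw [hD4]; nlinarith)
  have hX2 : cfX s (j+2) = (s + ((h+1 : ℤ) : ℝ)) / ((f+h-1 : ℤ) : ℝ) := by
    show 1 / Int.fract (cfX s (j+1)) = _
    rw [hX1]; exact hN1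
  -- step at j+2 : (h+1, f+h-1) → (f-2, 4), a = 1
  obtain ⟨hA2, hN2⟩ := cf_step D (h+1) (f+h-1) 1 (f-2) 4 (by linarith) hns
    (by ring) (by rw [hD4]; ring) (by linarith)
    (by rw [hD4]; nlinarith) (by rw [hD4]; nlinarith)
  have hX3 : cfX s (j+3) = (s + ((f-2 : ℤ) : ℝ)) / ((4 : ℤ) : ℝ) := by
    show 1 / Int.fract (cfX s (j+2)) = _
    rw [hX2]; exact hN2
  -- step at j+3 : (f-2, 4) → (f-2, f+h-1), a = e-1
  obtain ⟨hA3, hN3⟩ := cf_step D (f-2) 4 (e-1) (f-2) (f+h-1) (by linarith) hns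
    (by rw [hfe]; ring) (by rw [hD4]; ring) (by linarith)
    (by rw [hD4]; nlinarith) (by rw [hD4]; nlinarith)
  have hX4 : cfX s (j+4) = (s + ((f-2 : ℤ) : ℝ)) / ((f+h-1 : ℤ) : ℝ) := by
    show 1 / Int.fract (cfX s (j+3)) = _
    rw [hX3]; exact hN3
  -- step at j+4 : (f-2, f+h-1) → (h+1, f+1-h), a = 1
  obtain ⟨hA4, hN4⟩ := cf_step D (f-2) (f+h-1) 1 (h+1) (f+1-h) (by linarith) hns
    (by ring) (by rw [hD4]; ring) (by linarith)
    (by rw [hD4]; nlinarith) (by rw [hD4]; nlinarith)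
  have hX5 : cfX s (j+5) = (s + ((h+1 : ℤ) : ℝ)) / ((f+1-h : ℤ) : ℝ) := by
    show 1 / Int.fract (cfX s (j+4)) = _
    rw [hX4]; exact hN4
  -- step at j+5 : (h+1, f+1-h) → (f-2h, 4h), a = 1
  obtain ⟨hA5, hN5⟩ := cf_step D (h+1) (f+1-h) 1 (f-2*h) (4*h) (by linarith) hns
    (by ring) (by rw [hD4]; ring) (by linarith)
    (by rw [hD4]; nlinarith) (by rw [hD4]; nlinarith [mul_nonneg (show (0:ℤ) ≤ f - h by linarith) (show (0:ℤ) ≤ f - 3*h by linarith)])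
  have hX6 : cfX s (j+6) = (s + ((f-2*h : ℤ) : ℝ)) / ((4*h : ℤ) : ℝ) := by
    show 1 / Int.fract (cfX s (j+5)) = _
    rw [hX5]; exact hN5
  -- step at j+6 : (f-2h, 4h) → (f, 1), a = k
  obtain ⟨hA6, hN6⟩ := cf_step D (f-2*h) (4*h) k f 1 (by linarith) hns
    (by rw [hfm, hmk]; ring) (by rw [hD4]; ring) (by linarith)
    (by rw [hD4]; nlinarith) (by rw [hD4]; nlinarith)
  have hX7 : cfX s (j+7) = (s + ((f : ℤ) : ℝ)) / ((1 : ℤ) : ℝ) := by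
    show 1 / Int.fract (cfX s (j+6)) = _
    rw [hX6]; exact hN6
  -- step at j+7 : (f, 1) → (f, 4h), a = 2f
  obtain ⟨hA7, hN7⟩ := cf_step D f 1 (2*f) f (4*h) (by linarith) hns
    (by ring) (by rw [hD4]; ring) (by linarith)
    (by rw [hD4]; nlinarith) (by rw [hD4]; nlinarith)
  have hX8 : cfX s (j+8) = (s + ((f : ℤ) : ℝ)) / ((4*h : ℤ) : ℝ) := by
    show 1 / Int.fract (cfX s (j+7)) = _
    rw [hX7]; exact hN7
  refine ⟨⟨?_, ?_, ?_, ?_, ?_, ?_, ?_, ?_⟩, hX8⟩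
  · show ⌊cfX s j⌋ = k; rw [hXj]; exact hA0
  · show ⌊cfX s (j+1)⌋ = 1; rw [hX1]; exact hA1
  · show ⌊cfX s (j+2)⌋ = 1; rw [hX2]; exact hA2
  · show ⌊cfX s (j+3)⌋ = e - 1; rw [hX3]; exact hA3
  · show ⌊cfX s (j+4)⌋ = 1; rw [hX4]; exact hA4
  · show ⌊cfX s (j+5)⌋ = 1; rw [hX5]; exact hA5
  · show ⌊cfX s (j+6)⌋ = k; rw [hX6]; exact hA6
  · show ⌊cfX s (j+7)⌋ = 2 * f; rw [hX7]; exact hA7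

theorem stmt4 (α : ℕ) (f n m : ℤ) (hf : 1 ≤ f) (hn : 1 ≤ n) (hm : 3 ≤ m)
    (hmodd : Odd m) (hdiv : 4 * f = 2 ^ α * m * n) (hfeven : Even f) (hf4 : 4 ≤ f)
    (D : ℤ) (hD : D = f ^ 2 + 2 ^ α * n) (hns : ¬ IsSquare D) :
    cfA (Real.sqrt D) 0 = f ∧
      ∀ i : ℕ, cfA (Real.sqrt D) (8 * i + 1) = (m - 1) / 2 ∧
        cfA (Real.sqrt D) (8 * i + 2) = 1 ∧
        cfA (Real.sqrt D) (8 * i + 3) = 1 ∧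
        cfA (Real.sqrt D) (8 * i + 4) = (f - 2) / 2 ∧
        cfA (Real.sqrt D) (8 * i + 5) = 1 ∧
        cfA (Real.sqrt D) (8 * i + 6) = 1 ∧
        cfA (Real.sqrt D) (8 * i + 7) = (m - 1) / 2 ∧
        cfA (Real.sqrt D) (8 * i + 8) = 2 * f := by
  obtain ⟨k, hmk⟩ : ∃ k, m = 2 * k + 1 := by
    obtain ⟨k, hk⟩ := hmodd; exact ⟨k, by omega⟩
  obtain ⟨e, hfe⟩ : ∃ e, f = 2 * e := by
    obtain ⟨e, he⟩ := hfeven; exact ⟨e, by omega⟩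
  set t : ℤ := 2 ^ α * n with ht
  have htpos : 0 < t := by positivity
  have htm : t * m = 4 * f := by rw [ht]; linarith [hdiv, mul_comm m n]
  have htm' : t * m = 4 * f := by
    rw [ht, show 2 ^ α * n * m = 2 ^ α * m * n by ring]; linarith
  -- extract parity: t = 4h, f = h*m
  have het : Even t := by
    rcases Int.even_mul.mp (show Even (t * m) by rw [htm']; exact ⟨2 * f, by ring⟩) with h1 | h1
    · exact h1
    · exact absurd h1 (Int.not_even_iff_odd.mpr hmodd)
  obtain ⟨t1, ht1⟩ := het
  have ht1m : t1 * m = 2 * f := by nlinarith [htm']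
  have het1 : Even t1 := by
    rcases Int.even_mul.mp (show Even (t1 * m) by rw [ht1m]; exact ⟨f, by ring⟩) with h1 | h1
    · exact h1
    · exact absurd h1 (Int.not_even_iff_odd.mpr hmodd)
  obtain ⟨h, hth⟩ := het1
  have hfm : f = h * m := by nlinarith [ht1m]
  have htg : t = 4 * h := by omega
  have hh : 1 ≤ h := by omega
  have hD4 : D = f ^ 2 + 4 * h := by rw [hD, htg]
  subst hD4
  have hns' : ¬ IsSquare (f ^ 2 + 4 * h) := hns
  set s : ℝ := Real.sqrt ((f ^ 2 + 4 * h : ℤ) : ℝ) with hs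
  have hf3 : 3 * h ≤ f := by nlinarith
  -- initial step
  obtain ⟨hA0, hN0⟩ := cf_step (f ^ 2 + 4 * h) 0 1 f f (4 * h) one_pos hns'
    (by ring) (by ring) (by linarith) (by nlinarith) (by nlinarith)
  have hX0 : cfX s 0 = (s + ((0 : ℤ) : ℝ)) / ((1 : ℤ) : ℝ) := by
    show s = _; push_cast; ring
  have hX1 : cfX s 1 = (s + ((f : ℤ) : ℝ)) / ((4 * h : ℤ) : ℝ) := by
    show 1 / Int.fract (cfX s 0) = _
    rw [hX0]; exact hN0
  have hinv : ∀ i : ℕ, cfX s (8 * i + 1) = (s + ((f : ℤ) : ℝ)) / ((4 * h : ℤ) : ℝ) := by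
    intro i
    induction i with
    | zero => simpa using hX1
    | succ i ih =>
      have e8 : 8 * (i + 1) + 1 = (8 * i + 1) + 8 := by ring
      rw [e8]
      exact (cf_cycle f h k m e hh hm hf4 hfm hmk hfe hns' (8 * i + 1) ih).2
  have hk2 : (m - 1) / 2 = k := by omega
  have he2 : (f - 2) / 2 = e - 1 := by omega
  constructor
  · show ⌊cfX s 0⌋ = f
    rw [hX0]; exact hA0
  · intro i
    obtain ⟨⟨c1, c2, c3, c4, c5, c6, c7, c8⟩, _⟩ :=
      cf_cycle f h k m e hh hm hf4 hfm hmk hfe hns' (8 * i + 1) (hinv i)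
    rw [hk2, he2]
    refine ⟨c1, ?_, ?_, ?_, ?_, ?_, ?_, ?_⟩
    · rw [show 8 * i + 2 = 8 * i + 1 + 1 by ring]; exact c2
    · rw [show 8 * i + 3 = 8 * i + 1 + 2 by ring]; exact c3
    · rw [show 8 * i + 4 = 8 * i + 1 + 3 by ring]; exact c4
    · rw [show 8 * i + 5 = 8 * i + 1 + 4 by ring]; exact c5
    · rw [show 8 * i + 6 = 8 * i + 1 + 5 by ring]; exact c6
    · rw [show 8 * i + 7 = 8 * i + 1 + 6 by ring]; exact c7
    · rw [show 8 * i + 8 = 8 * i + 1 + 7 by ring]; exact c8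
end

section
/- Let α ≥ 0 and f, n ≥ 1 be integers, let m ≥ 3 be an odd integer, assume 4·f = 2^α·m·n, that f is even with f ≥ 4, and set D = f² + 2^α·n. Assume D is not a perfect square. Then (X, Y) = (f·m·(f·m+4)/2 + 1, m·(f·m+2)/2) is the fundamental solution of the Pell equation X² − D·Y² = 1; that is, X² − D·Y² = 1 and every pair of positive integers (x, y) with x² − D·y² = 1 satisfies Y ≤ y. -/
theorem stmt5 (α : ℕ) (f n m : ℤ) (hf : 1 ≤ f) (hn : 1 ≤ n) (hm : 3 ≤ m)
    (hmodd : Odd m) (hdiv : 4 * f = 2 ^ α * m * n) (hfeven : Even f) (hf4 : 4 ≤ f)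
    (D : ℤ) (hD : D = f ^ 2 + 2 ^ α * n) (hns : ¬ IsSquare D) :
    (f * m * (f * m + 4) / 2 + 1) ^ 2 - D * (m * (f * m + 2) / 2) ^ 2 = 1 ∧
      ∀ x y : ℤ, 0 < x → 0 < y → x ^ 2 - D * y ^ 2 = 1 → m * (f * m + 2) / 2 ≤ y := by
  obtain ⟨g, hg⟩ := hfeven
  have hmd : m * (2 ^ α * n) = 4 * f := by linear_combination -hdiv
  have hcop : IsCoprime (4 : ℤ) m := by
    obtain ⟨k, hk⟩ := hmodd
    exact ⟨-(k ^ 2 + k), m, by rw [hk]; ring⟩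
  have h4d : (4 : ℤ) ∣ 2 ^ α * n := hcop.dvd_of_dvd_mul_left ⟨f, hmd⟩
  obtain ⟨e, he⟩ := h4d
  have hfme : f = m * e := by
    have h4 : 4 * f = 4 * (m * e) := by rw [he] at hmd; linear_combination -hmd
    exact mul_left_cancel₀ (by norm_num : (4:ℤ) ≠ 0) h4
  have he1 : 1 ≤ e := by nlinarith
  rw [he] at hD
  subst hD
  subst hg
  have hg2 : 2 ≤ g := by linarith
  have hfme' : g + g = m * e := hfme
  have d1 : (g + g) * m * ((g + g) * m + 4) = 2 * (g * m * ((g + g) * m + 4)) := by ring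
  have d2 : m * ((g + g) * m + 2) = 2 * (m * (g * m + 1)) := by ring
  constructor
  · rw [d1, d2, Int.mul_ediv_cancel_left _ (by norm_num : (2:ℤ) ≠ 0),
      Int.mul_ediv_cancel_left _ (by norm_num : (2:ℤ) ≠ 0)]
    linear_combination (4 * m * (g * m + 1) ^ 2) * hfme'
  · intro x y hx hy hxy
    rw [d2, Int.mul_ediv_cancel_left _ (by norm_num : (2:ℤ) ≠ 0)]
    have hfy : (g + g) * y < x := by nlinarith [hxy, mul_pos hx hy, mul_pos hy hy]
    have key1 : (x - (g + g) * y) ^ 2 + 2 * (g + g) * (x - (g + g) * y) * y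
        = 1 + 4 * e * y ^ 2 := by linear_combination hxy
    set u := x - (g + g) * y with hu
    clear_value u
    have hu1 : 1 ≤ u := by rw [hu]; linarith
    rcases eq_or_lt_of_le hu1 with h1 | h2
    · exfalso
      rw [← h1] at key1
      have h0 : 2 * (e * y) * (m - 2 * y) = 0 := by
        linear_combination key1 - 2 * y * hfme'
      have hey : 0 < e * y := mul_pos (by linarith) hy
      have hm2y : m = 2 * y := by
        rcases mul_eq_zero.mp h0 with h | h
        · nlinarith
        · linarith
      obtain ⟨k, hk⟩ := hmodd
      omega
    · set t := 2 * y - m * u with htd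
      clear_value t
      have keyt : u ^ 2 - 1 = 2 * e * y * t := by
        linear_combination key1 - 2 * e * y * htd - 2 * u * y * hfme'
      have ht1 : 1 ≤ t := by
        by_contra h
        push_neg at h
        have h' : 2 * e * y * t ≤ 0 :=
          mul_nonpos_of_nonneg_of_nonpos (by positivity) (by linarith)
        nlinarith [keyt, h2]
      have key2 : u ^ 2 - (g + g) * t * u - e * t ^ 2 = 1 := by
        linear_combination keyt - e * t * htd - t * u * hfme'
      have hprod : u * (u - (g + g) * t) = 1 + e * t ^ 2 := by linear_combination key2
      have hv1 : 1 ≤ u - (g + g) * t := by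
        rcases le_or_gt (u - (g + g) * t) 0 with h | h
        · exfalso
          have h1' : u * (u - (g + g) * t) ≤ 0 :=
            mul_nonpos_of_nonneg_of_nonpos (by linarith) h
          have h2' : 0 ≤ e * t ^ 2 := mul_nonneg (by linarith) (sq_nonneg t)
          linarith
        · linarith
      have key3 : e * t * (t - m * (u - (g + g) * t)) = (u - (g + g) * t) ^ 2 - 1 := by
        linear_combination -key2 + t * (u - (g + g) * t) * hfme'
      have hmv : m * (u - (g + g) * t) ≤ t := by
        by_contra h
        push_neg at h
        have hneg : 0 < e * t * (m * (u - (g + g) * t) - t) :=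
          mul_pos (mul_pos (by linarith) (by linarith)) (by linarith)
        have hv2 : 1 ≤ (u - (g + g) * t) ^ 2 := by nlinarith [hv1]
        linarith [key3, hneg, hv2]
      have htm : m ≤ t := by
        linarith [mul_nonneg (show (0:ℤ) ≤ m by linarith)
          (show (0:ℤ) ≤ u - (g + g) * t - 1 by linarith)]
      have hum : 1 + (g + g) * m ≤ u := by
        linarith [mul_nonneg (show (0:ℤ) ≤ g + g by linarith)
          (show (0:ℤ) ≤ t - m by linarith)]
      have h2y : 2 * y = m * u + t := by rw [htd]; ring
      have hp : m * (1 + (g + g) * m) ≤ m * u :=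
        mul_le_mul_of_nonneg_left hum (by linarith)
      linarith [hp, htm, h2y]
end

section
/- Let α ≥ 0 and f, n ≥ 1 be integers, let m ≥ 5 be an odd integer, assume 4·f = 2^α·m·n, that f is even with f ≥ 4, and set D = f² − 2^α·n. Assume D is not a perfect square. Then the simple continued fraction expansion of √D is periodic with a₀ = ⌊√D⌋ = f−1 and period of length 8: for every integer i ≥ 0, a_{8i+1} = 1, a_{8i+2} = (m−3)/2, a_{8i+3} = 2, a_{8i+4} = (f−2)/2, a_{8i+5} = 2, a_{8i+6} = (m−3)/2, a_{8i+7} = 1, a_{8i+8} = 2(f−1). -/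
lemma cfX_succ (x : ℝ) (i : ℕ) : cfX x (i + 1) = 1 / Int.fract (cfX x i) := rfl

lemma cfStep (D : ℤ) (s x : ℝ) (hs : s ^ 2 = (D : ℝ)) (p q a p' q' : ℤ)
    (hx : x = (s + (p : ℝ)) / (q : ℝ)) (hq : (0 : ℝ) < (q : ℝ))
    (hq' : q * q' = D - p' ^ 2) (hp' : p' = a * q - p)
    (hlow : ((a : ℝ)) * (q : ℝ) < s + (p : ℝ))
    (hhigh : s + (p : ℝ) < ((a : ℝ) + 1) * (q : ℝ))
    (hsp : ((p' : ℝ)) < s) (hp0 : (0 : ℝ) ≤ ((p' : ℝ))) :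
    ⌊x⌋ = a ∧ 1 / Int.fract x = (s + (p' : ℝ)) / (q' : ℝ) := by
  have hq0 : (q : ℝ) ≠ 0 := ne_of_gt hq
  have hfl : ⌊x⌋ = a := by
    rw [hx, Int.floor_eq_iff]
    constructor
    · rw [le_div_iff₀ hq]; linarith
    · rw [div_lt_iff₀ hq]; push_cast; linarith
  have hpR : (p' : ℝ) = (a : ℝ) * (q : ℝ) - (p : ℝ) := by exact_mod_cast hp'
  have hfr : Int.fract x = (s - (p' : ℝ)) / q := by
    have h1 : Int.fract x = x - (⌊x⌋ : ℝ) := (Int.self_sub_floor x).symm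
    rw [h1, hfl, hx, hpR]
    field_simp
    ring
  have hq'R : (q : ℝ) * (q' : ℝ) = s ^ 2 - (p' : ℝ) ^ 2 := by
    rw [hs]; exact_mod_cast hq'
  have hsppos : (0 : ℝ) < s - p' := by linarith
  have hsp2 : (0 : ℝ) < s + p' := by linarith
  have hq'pos : (0 : ℝ) < (q' : ℝ) := by nlinarith [mul_pos hsppos hsp2]
  refine ⟨hfl, ?_⟩
  rw [hfr, one_div_div, div_eq_div_iff (ne_of_gt hsppos) (ne_of_gt hq'pos)]
  linear_combination hq'R

lemma cycle (K T D : ℤ) (hK : 2 ≤ K) (hT : 1 ≤ T)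
    (hD : D = ((2*K+1)*(2*T))^2 - 8*T) (s : ℝ) (hs : s ^ 2 = (D : ℝ))
    (hsl : ((4*K*T+2*T-1 : ℤ) : ℝ) < s) (hsu : s < ((4*K*T+2*T : ℤ) : ℝ))
    (j : ℕ)
    (hj : cfX s j = (s + ((4*K*T+2*T-1 : ℤ) : ℝ)) / ((8*K*T-4*T-1 : ℤ) : ℝ)) :
    (⌊cfX s j⌋ = 1 ∧ ⌊cfX s (j+1)⌋ = K-1 ∧ ⌊cfX s (j+2)⌋ = 2 ∧
     ⌊cfX s (j+3)⌋ = 2*K*T+T-1 ∧ ⌊cfX s (j+4)⌋ = 2 ∧ ⌊cfX s (j+5)⌋ = K-1 ∧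
     ⌊cfX s (j+6)⌋ = 1 ∧ ⌊cfX s (j+7)⌋ = 2*(4*K*T+2*T)-2) ∧
    cfX s (j+8) = (s + ((4*K*T+2*T-1 : ℤ) : ℝ)) / ((8*K*T-4*T-1 : ℤ) : ℝ) := by
  subst hD
  push_cast at hsl hsu
  have hKR : (2:ℝ) ≤ (K:ℝ) := by exact_mod_cast hK
  have hTR : (1:ℝ) ≤ (T:ℝ) := by exact_mod_cast hT
  have hKT : (2:ℝ)*(T:ℝ) ≤ (K:ℝ)*(T:ℝ) := by
    have h0 : (0:ℝ) ≤ ((K:ℝ)-2)*(T:ℝ) := mul_nonneg (by linarith) (by linarith)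
    linarith
  obtain ⟨F1, E1⟩ := cfStep (((2*K+1)*(2*T))^2 - 8*T) s _ hs (4*K*T+2*T-1) (8*K*T-4*T-1) (1) (4*K*T-6*T) (8*T)
    hj (by push_cast; linarith) (by ring) (by ring)
    (by push_cast; linarith) (by push_cast; linarith) (by push_cast; linarith) (by push_cast; linarith)
  have X2 : cfX s (j+1) = (s + ((4*K*T-6*T : ℤ) : ℝ)) / ((8*T : ℤ) : ℝ) := by
    rw [cfX_succ, E1]
  obtain ⟨F2, E2⟩ := cfStep (((2*K+1)*(2*T))^2 - 8*T) s _ hs (4*K*T-6*T) (8*T) (K-1) (4*K*T-2*T) (4*K*T-1)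
    X2 (by push_cast; linarith) (by ring) (by ring)
    (by push_cast; linarith) (by push_cast; linarith) (by push_cast; linarith) (by push_cast; linarith)
  have X3 : cfX s (j+2) = (s + ((4*K*T-2*T : ℤ) : ℝ)) / ((4*K*T-1 : ℤ) : ℝ) := by
    rw [show j+2 = (j+1)+1 from rfl, cfX_succ, E2]
  obtain ⟨F3, E3⟩ := cfStep (((2*K+1)*(2*T))^2 - 8*T) s _ hs (4*K*T-2*T) (4*K*T-1) (2) (4*K*T+2*T-2) (4)
    X3 (by push_cast; linarith) (by ring) (by ring)
    (by push_cast; linarith) (by push_cast; linarith) (by push_cast; linarith) (by push_cast; linarith)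
  have X4 : cfX s (j+3) = (s + ((4*K*T+2*T-2 : ℤ) : ℝ)) / ((4 : ℤ) : ℝ) := by
    rw [show j+3 = (j+2)+1 from rfl, cfX_succ, E3]
  obtain ⟨F4, E4⟩ := cfStep (((2*K+1)*(2*T))^2 - 8*T) s _ hs (4*K*T+2*T-2) (4) (2*K*T+T-1) (4*K*T+2*T-2) (4*K*T-1)
    X4 (by push_cast; linarith) (by ring) (by ring)
    (by push_cast; linarith) (by push_cast; linarith) (by push_cast; linarith) (by push_cast; linarith)
  have X5 : cfX s (j+4) = (s + ((4*K*T+2*T-2 : ℤ) : ℝ)) / ((4*K*T-1 : ℤ) : ℝ) := by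
    rw [show j+4 = (j+3)+1 from rfl, cfX_succ, E4]
  obtain ⟨F5, E5⟩ := cfStep (((2*K+1)*(2*T))^2 - 8*T) s _ hs (4*K*T+2*T-2) (4*K*T-1) (2) (4*K*T-2*T) (8*T)
    X5 (by push_cast; linarith) (by ring) (by ring)
    (by push_cast; linarith) (by push_cast; linarith) (by push_cast; linarith) (by push_cast; linarith)
  have X6 : cfX s (j+5) = (s + ((4*K*T-2*T : ℤ) : ℝ)) / ((8*T : ℤ) : ℝ) := by
    rw [show j+5 = (j+4)+1 from rfl, cfX_succ, E5]
  obtain ⟨F6, E6⟩ := cfStep (((2*K+1)*(2*T))^2 - 8*T) s _ hs (4*K*T-2*T) (8*T) (K-1) (4*K*T-6*T) (8*K*T-4*T-1)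
    X6 (by push_cast; linarith) (by ring) (by ring)
    (by push_cast; linarith) (by push_cast; linarith) (by push_cast; linarith) (by push_cast; linarith)
  have X7 : cfX s (j+6) = (s + ((4*K*T-6*T : ℤ) : ℝ)) / ((8*K*T-4*T-1 : ℤ) : ℝ) := by
    rw [show j+6 = (j+5)+1 from rfl, cfX_succ, E6]
  obtain ⟨F7, E7⟩ := cfStep (((2*K+1)*(2*T))^2 - 8*T) s _ hs (4*K*T-6*T) (8*K*T-4*T-1) (1) (4*K*T+2*T-1) (1)
    X7 (by push_cast; linarith) (by ring) (by ring)
    (by push_cast; linarith) (by push_cast; linarith) (by push_cast; linarith) (by push_cast; linarith)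
  have X8 : cfX s (j+7) = (s + ((4*K*T+2*T-1 : ℤ) : ℝ)) / ((1 : ℤ) : ℝ) := by
    rw [show j+7 = (j+6)+1 from rfl, cfX_succ, E7]
  obtain ⟨F8, E8⟩ := cfStep (((2*K+1)*(2*T))^2 - 8*T) s _ hs (4*K*T+2*T-1) (1) (2*(4*K*T+2*T)-2) (4*K*T+2*T-1) (8*K*T-4*T-1)
    X8 (by push_cast; linarith) (by ring) (by ring)
    (by push_cast; linarith) (by push_cast; linarith) (by push_cast; linarith) (by push_cast; linarith)
  have X9 : cfX s (j+8) = (s + ((4*K*T+2*T-1 : ℤ) : ℝ)) / ((8*K*T-4*T-1 : ℤ) : ℝ) := by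
    rw [show j+8 = (j+7)+1 from rfl, cfX_succ, E8]
  exact ⟨⟨F1, F2, F3, F4, F5, F6, F7, F8⟩, X9⟩
theorem stmt6 (α : ℕ) (f n m : ℤ) (hf : 1 ≤ f) (hn : 1 ≤ n) (hm : 5 ≤ m)
    (hmodd : Odd m) (hdiv : 4 * f = 2 ^ α * m * n) (hfeven : Even f) (hf4 : 4 ≤ f)
    (D : ℤ) (hD : D = f ^ 2 - 2 ^ α * n) (hns : ¬ IsSquare D) :
    cfA (Real.sqrt D) 0 = f - 1 ∧
      ∀ i : ℕ, cfA (Real.sqrt D) (8 * i + 1) = 1 ∧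
        cfA (Real.sqrt D) (8 * i + 2) = (m - 3) / 2 ∧
        cfA (Real.sqrt D) (8 * i + 3) = 2 ∧
        cfA (Real.sqrt D) (8 * i + 4) = (f - 2) / 2 ∧
        cfA (Real.sqrt D) (8 * i + 5) = 2 ∧
        cfA (Real.sqrt D) (8 * i + 6) = (m - 3) / 2 ∧
        cfA (Real.sqrt D) (8 * i + 7) = 1 ∧
        cfA (Real.sqrt D) (8 * i + 8) = 2 * (f - 1) := by
  obtain ⟨k, hk⟩ := hmodd
  have hk' : m = 2 * k + 1 := by omega
  clear hk
  subst hk'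
  have hGpos : (0:ℤ) < 2 ^ α * n := by positivity
  have keyE : ∀ g : ℤ, Even (g * (2 * k + 1)) → Even g := by
    intro g hg
    rcases Int.even_mul.mp hg with h | h
    · exact h
    · obtain ⟨c, hc⟩ := h; exfalso; omega
  have e1 : Even ((2 ^ α * n) * (2 * k + 1)) := ⟨2 * f, by linear_combination -hdiv⟩
  obtain ⟨g1, hg1⟩ := keyE _ e1
  have c1 : 2 * (g1 * (2 * k + 1)) = 2 * (f + f) := by
    linear_combination -hdiv - (2 * k + 1) * hg1
  have e2 : g1 * (2 * k + 1) = f + f := mul_left_cancel₀ two_ne_zero c1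
  obtain ⟨g2, hg2⟩ := keyE _ ⟨f, e2⟩
  have c2 : 2 * (g2 * (2 * k + 1)) = 2 * f := by
    linear_combination e2 - (2 * k + 1) * hg2
  have e3 : g2 * (2 * k + 1) = f := mul_left_cancel₀ two_ne_zero c2
  obtain ⟨f2, hf2⟩ := hfeven
  obtain ⟨g3, hg3⟩ := keyE g2 ⟨f2, by rw [e3, hf2]⟩
  have hfh : f = (2 * k + 1) * (2 * g3) := by linear_combination -e3 + (2 * k + 1) * hg3
  subst hfh
  have hGh : 2 ^ α * n = 8 * g3 := by linear_combination hg1 + 2 * hg2 + 4 * hg3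
  have hD2 : D = ((2 * k + 1) * (2 * g3)) ^ 2 - 8 * g3 := by rw [hD, hGh]
  have hk2 : 2 ≤ k := by omega
  have hg3' : 1 ≤ g3 := by
    have h8 : (0:ℤ) < 8 * g3 := hGh ▸ hGpos
    omega
  -- real facts
  set s : ℝ := Real.sqrt (D : ℝ) with hsdef
  have hkg : 2 * g3 ≤ k * g3 := by nlinarith
  have hg3R : (1:ℝ) ≤ (g3:ℝ) := by exact_mod_cast hg3'
  have hkR : (2:ℝ) ≤ (k:ℝ) := by exact_mod_cast hk2
  have hkgR : (2:ℝ) * (g3:ℝ) ≤ (k:ℝ) * (g3:ℝ) := by exact_mod_cast hkg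
  have hD0 : (0:ℤ) < D := by rw [hD2]; nlinarith [sq_nonneg ((2*k+1)*(2*g3))]
  have hs2 : s ^ 2 = (D : ℝ) := Real.sq_sqrt (by exact_mod_cast hD0.le)
  have hflow : ((4*k*g3+2*g3-1 : ℤ)) ^ 2 < D := by rw [hD2]; nlinarith
  have hfup : D < ((4*k*g3+2*g3 : ℤ)) ^ 2 := by rw [hD2]; nlinarith
  have hsl : ((4*k*g3+2*g3-1 : ℤ) : ℝ) < s := by
    rw [hsdef, show ((4*k*g3+2*g3-1 : ℤ) : ℝ) = (((4*k*g3+2*g3-1 : ℤ) : ℝ)) from rfl]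
    rw [← Real.sqrt_sq (by push_cast; linarith : (0:ℝ) ≤ ((4*k*g3+2*g3-1 : ℤ) : ℝ))]
    apply Real.sqrt_lt_sqrt (by positivity)
    exact_mod_cast hflow
  have hsu : s < ((4*k*g3+2*g3 : ℤ) : ℝ) := by
    rw [hsdef]
    rw [← Real.sqrt_sq (by push_cast; linarith : (0:ℝ) ≤ ((4*k*g3+2*g3 : ℤ) : ℝ))]
    apply Real.sqrt_lt_sqrt (by exact_mod_cast hD0.le)
    exact_mod_cast hfup
  -- base step
  have hx0 : cfX s 0 = (s + ((0 : ℤ) : ℝ)) / ((1 : ℤ) : ℝ) := by simp [cfX]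
  obtain ⟨F0, E0⟩ := cfStep D s (cfX s 0) hs2 0 1 (4*k*g3+2*g3-1) (4*k*g3+2*g3-1)
    (8*k*g3-4*g3-1) hx0 (by norm_num)
    (by linear_combination -hD2) (by ring)
    (by push_cast; push_cast at hsl; linarith)
    (by push_cast; push_cast at hsu; linarith)
    (by exact hsl) (by push_cast; linarith)
  have X1 : cfX s 1 = (s + ((4*k*g3+2*g3-1 : ℤ) : ℝ)) / ((8*k*g3-4*g3-1 : ℤ) : ℝ) := by
    rw [show (1:ℕ) = 0 + 1 from rfl, cfX_succ, E0]
  have per : ∀ i : ℕ, cfX s (8 * i + 1)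
      = (s + ((4*k*g3+2*g3-1 : ℤ) : ℝ)) / ((8*k*g3-4*g3-1 : ℤ) : ℝ) := by
    intro i
    induction i with
    | zero => simpa using X1
    | succ p ih =>
        have := (cycle k g3 D hk2 hg3' hD2 s hs2 hsl hsu (8 * p + 1) ih).2
        rw [show 8 * (p + 1) + 1 = 8 * p + 1 + 8 by ring]
        exact this
  constructor
  · show ⌊cfX s 0⌋ = _
    rw [F0]; ring
  · intro i
    obtain ⟨⟨G1, G2, G3, G4, G5, G6, G7, G8⟩, -⟩ :=
      cycle k g3 D hk2 hg3' hD2 s hs2 hsl hsu (8 * i + 1) (per i)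
    refine ⟨?_, ?_, ?_, ?_, ?_, ?_, ?_, ?_⟩
    · show ⌊cfX s (8 * i + 1)⌋ = _; rw [G1]
    · show ⌊cfX s (8 * i + 2)⌋ = _
      rw [show 8 * i + 2 = 8 * i + 1 + 1 from rfl, G2]; omega
    · show ⌊cfX s (8 * i + 3)⌋ = _
      rw [show 8 * i + 3 = 8 * i + 1 + 2 from rfl, G3]
    · show ⌊cfX s (8 * i + 4)⌋ = _
      rw [show 8 * i + 4 = 8 * i + 1 + 3 from rfl, G4,
        show (2*k+1) * (2*g3) - 2 = 2 * (2*k*g3+g3-1) by ring,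
        Int.mul_ediv_cancel_left _ two_ne_zero]
    · show ⌊cfX s (8 * i + 5)⌋ = _
      rw [show 8 * i + 5 = 8 * i + 1 + 4 from rfl, G5]
    · show ⌊cfX s (8 * i + 6)⌋ = _
      rw [show 8 * i + 6 = 8 * i + 1 + 5 from rfl, G6]; omega
    · show ⌊cfX s (8 * i + 7)⌋ = _
      rw [show 8 * i + 7 = 8 * i + 1 + 6 from rfl, G7]
    · show ⌊cfX s (8 * i + 8)⌋ = _
      rw [show 8 * i + 8 = 8 * i + 1 + 7 from rfl, G8]; ring
end

section
/- Let α ≥ 0 and f, n ≥ 1 be integers, let m ≥ 5 be an odd integer, assume 4·f = 2^α·m·n, that f is even with f ≥ 4, and set D = f² − 2^α·n. Assume D is not a perfect square. Then (X, Y) = (f·m·(f·m−4)/2 + 1, m·(f·m−2)/2) is the fundamental solution of the Pell equation X² − D·Y² = 1; that is, X² − D·Y² = 1 and every pair of positive integers (x, y) with x² − D·y² = 1 satisfies Y ≤ y. -/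
lemma small_aux (m e p q : ℤ) (hm : 5 ≤ m) (hmodd : Odd m) (he : 1 ≤ e)
    (hp : 0 < p) (hq : 0 < q) (hpq : p ^ 2 - (4*m^2*e^2 - 8*e) * q ^ 2 = 1)
    (hsmall : 2 * (p * q) ≤ m * (m^2*e - 1)) : False := by
  have hq2 : 1 ≤ q^2 := by nlinarith
  have hme : (0:ℤ) < m*e := by nlinarith
  have h1 : (2*m*e - 1) * q + 1 ≤ p := by
    have h0 : (0:ℤ) ≤ (2*m*e-1)*q := by nlinarith
    have h : (2*m*e - 1) * q < p := by
      by_contra hcon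
      push_neg at hcon
      have hsq : p*p ≤ ((2*m*e-1)*q)*((2*m*e-1)*q) := mul_le_mul hcon hcon hp.le h0
      have hfact : (0:ℤ) ≤ (4*m*e - 8*e - 1) * q^2 := by
        have : (0:ℤ) ≤ 4*m*e - 8*e - 1 := by nlinarith
        positivity
      nlinarith
    linarith
  have h2 : 2 * q ≤ m - 1 := by
    have h2' : 2 * q ≤ m := by
      by_contra hcon
      push_neg at hcon
      have hchain : 2*q*((2*m*e-1)*q+1) ≤ 2*q*p :=
        mul_le_mul_of_nonneg_left h1 (by linarith)
      have ht1 : (0:ℤ) ≤ (2*q-m-1)*(2*q+m+1) :=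
        mul_nonneg (by linarith) (by linarith)
      have ht2 : (0:ℤ) ≤ m*e*((2*q-m-1)*(2*q+m+1)) := mul_nonneg hme.le ht1
      nlinarith [hchain, ht1, ht2]
    obtain ⟨w, hw⟩ := hmodd
    omega
  have hj1 : 1 ≤ 2*m*e*q - p := by
    have h0 : (0:ℤ) ≤ 2*m*e*q := by nlinarith
    have : p < 2*m*e*q := by
      by_contra hcon
      push_neg at hcon
      have hsq : (2*m*e*q)*(2*m*e*q) ≤ p*p := mul_le_mul hcon hcon h0 hp.le
      nlinarith [mul_pos (show (0:ℤ) < e by linarith) (show (0:ℤ) < q^2 by nlinarith)]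
    linarith
  have hj2 : 2*m*e*q - p ≤ q - 1 := by linarith
  set j : ℤ := 2*m*e*q - p with hj
  have hid : j ^ 2 - 1 = 4*e*q*(m*j - 2*q) := by
    rw [hj]; linear_combination hpq
  have hmj : 1 ≤ m * j - 2*q := by
    have : m*1 ≤ m*j := by
      exact mul_le_mul_of_nonneg_left hj1 (by linarith)
    linarith
  rcases eq_or_lt_of_le hj1 with h | h
  · rw [← h] at hid hmj
    nlinarith [mul_pos (mul_pos (show (0:ℤ) < e by linarith) hq) (show (0:ℤ) < m*1 - 2*q by linarith)]
  · have hj2' : 2 ≤ j := by omega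
    have hm2 : m*2 ≤ m*j := mul_le_mul_of_nonneg_left hj2' (by linarith)
    have hmj2 : m + 1 ≤ m*j - 2*q := by linarith
    have hqmj : q*(m+1) ≤ q*(m*j-2*q) := mul_le_mul_of_nonneg_left hmj2 hq.le
    have heq : (0:ℤ) ≤ (e-1)*(q*(m*j-2*q)) :=
      mul_nonneg (by linarith) (by nlinarith)
    have hjj : j*j ≤ (q-1)*(q-1) := mul_le_mul hj2 hj2 (by linarith) (by linarith)
    have hq3 : (0:ℤ) ≤ q*(m-1-2*q) := mul_nonneg hq.le (by linarith)
    nlinarith [hid, hqmj, heq, hjj, hq3, hq, hm]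

lemma ypow_nonneg {d : ℤ} {a : Pell.Solution₁ d} (hax : 0 < a.x) (hay : 0 < a.y) (n : ℕ) :
    0 ≤ (a ^ n).y := by
  cases n with
  | zero => simp
  | succ n => exact (Pell.Solution₁.y_pow_succ_pos hax hay n).le

set_option maxHeartbeats 1000000 in
theorem stmt7 (α : ℕ) (f n m : ℤ) (hf : 1 ≤ f) (hn : 1 ≤ n) (hm : 5 ≤ m)
    (hmodd : Odd m) (hdiv : 4 * f = 2 ^ α * m * n) (hfeven : Even f) (hf4 : 4 ≤ f)
    (D : ℤ) (hD : D = f ^ 2 - 2 ^ α * n) (hns : ¬ IsSquare D) :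
    (f * m * (f * m - 4) / 2 + 1) ^ 2 - D * (m * (f * m - 2) / 2) ^ 2 = 1 ∧
      ∀ x y : ℤ, 0 < x → 0 < y → x ^ 2 - D * y ^ 2 = 1 → m * (f * m - 2) / 2 ≤ y := by
  have hm0 : (0:ℤ) < m := by linarith
  -- m ∣ f
  have h2m : ¬ (2:ℤ) ∣ m := by obtain ⟨w, hw⟩ := hmodd; omega
  have hcop2 : IsCoprime (2:ℤ) m := (Int.prime_two.coprime_iff_not_dvd).mpr h2m
  have hcop4 : IsCoprime (4:ℤ) m := by
    have := hcop2.mul_left hcop2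
    norm_num at this
    exact this
  have hmf : m ∣ f := hcop4.symm.dvd_of_dvd_mul_left ⟨2 ^ α * n, by linear_combination hdiv⟩
  obtain ⟨c, hc⟩ := hmf
  have hceven : Even c := by
    rw [hc] at hfeven
    rcases Int.even_mul.mp hfeven with h | h
    · exact absurd h (Int.not_even_iff_odd.mpr hmodd)
    · exact h
  obtain ⟨e, he'⟩ := hceven
  have hf2 : f = 2 * (m * e) := by rw [hc, he']; ring
  have he : 1 ≤ e := by nlinarith
  have h8e : 2 ^ α * n = 8 * e := by
    rw [hf2] at hdiv
    have h : m * (2 ^ α * n) = m * (8 * e) := by linear_combination -hdiv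
    exact (mul_left_cancel₀ hm0.ne' h)
  have hD' : D = 4*m^2*e^2 - 8*e := by rw [hD, hf2, h8e]; ring
  -- simplify the divisions
  have hX : f * m * (f * m - 4) / 2 = 2*m^2*e*(m^2*e - 2) := by
    have h : f * m * (f * m - 4) = 2 * (2*m^2*e*(m^2*e - 2)) := by rw [hf2]; ring
    rw [h, Int.mul_ediv_cancel_left _ two_ne_zero]
  have hY : m * (f * m - 2) / 2 = m * (m^2*e - 1) := by
    have h : m * (f * m - 2) = 2 * (m * (m^2*e - 1)) := by rw [hf2]; ring
    rw [h, Int.mul_ediv_cancel_left _ two_ne_zero]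
  have hprop : (2*m^2*e*(m^2*e - 2) + 1) ^ 2 - D * (m * (m^2*e - 1)) ^ 2 = 1 := by
    rw [hD']; ring
  constructor
  · rw [hX, hY]; exact hprop
  · intro x y hx hy hxy
    rw [hY]
    have hD0 : 0 < D := by rw [hD']; nlinarith
    obtain ⟨a, ha⟩ := Pell.IsFundamental.exists_of_not_isSquare hD0 hns
    have hax : 0 < a.x := ha.x_pos
    have hay : 0 < a.y := ha.2.1
    have hY0 : 0 < m * (m^2*e - 1) := by nlinarith
    -- the given solution as a Solution₁
    have hx1 : 1 < x := by nlinarith [sq_nonneg (x-1), sq_nonneg y]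
    have hble : a.y ≤ (Pell.Solution₁.mk x y hxy).y := by
      refine ha.y_le_y ?_ ?_
      · rw [Pell.Solution₁.x_mk]; exact hx1
      · rw [Pell.Solution₁.y_mk]; exact hy
    rw [Pell.Solution₁.y_mk] at hble
    -- our solution is a power of the fundamental one
    obtain ⟨k, hk⟩ := ha.eq_pow_of_nonneg
      (a := Pell.Solution₁.mk (2*m^2*e*(m^2*e - 2) + 1) (m * (m^2*e - 1)) hprop)
      (by rw [Pell.Solution₁.x_mk]; nlinarith) (by rw [Pell.Solution₁.y_mk]; exact hY0.le)
    have hky : m * (m^2*e - 1) = (a ^ k).y := by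
      have := congrArg Pell.Solution₁.y hk
      rwa [Pell.Solution₁.y_mk] at this
    rcases (by omega : k = 0 ∨ k = 1 ∨ 2 ≤ k) with rfl | rfl | hk2
    · rw [pow_zero] at hky
      simp only [Pell.Solution₁.y_one] at hky
      exact absurd hky hY0.ne'
    · rw [pow_one] at hky
      exact hky.trans_le hble
    · obtain ⟨j, rfl⟩ : ∃ j, k = j + 2 := ⟨k - 2, by omega⟩
      exfalso
      have hrw : (a ^ (j+2)).y = (a^j).x * (a.x*a.y + a.y*a.x) + (a^j).y * (a.x*a.x + D*(a.y*a.y)) := by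
        rw [pow_add, Pell.Solution₁.y_mul, pow_two, Pell.Solution₁.y_mul, Pell.Solution₁.x_mul]
      have hxj : 0 < (a^j).x := Pell.Solution₁.x_pow_pos hax j
      have hyj : 0 ≤ (a^j).y := ypow_nonneg hax hay j
      have hxx : 0 < a.x*a.x + D*(a.y*a.y) :=
        add_pos_of_pos_of_nonneg (mul_pos hax hax) (mul_nonneg hD0.le (mul_nonneg hay.le hay.le))
      have hsmall : 2 * (a.x * a.y) ≤ m * (m^2*e - 1) := by
        rw [hky, hrw]
        nlinarith [mul_nonneg hyj hxx.le]
      exact small_aux m e a.x a.y hm hmodd he hax hay (by rw [← hD']; exact a.prop) hsmall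
end

section
/- Let α ≥ 0 and f, n ≥ 1 be integers, let m ≥ 3 be an odd integer, assume 4·f = 2^α·m·n, that f is odd with f ≥ 3, and set D = f² + 2^α·n. Assume D is not a perfect square. Then the simple continued fraction expansion of √D is periodic with a₀ = ⌊√D⌋ = f and period of length 10: for every integer i ≥ 0, a_{10i+1} = (m−1)/2, a_{10i+2} = 1, a_{10i+3} = 1, a_{10i+4} = (f−1)/2, a_{10i+5} = 2m, a_{10i+6} = (f−1)/2, a_{10i+7} = 1, a_{10i+8} = 1, a_{10i+9} = (m−1)/2, a_{10i+10} = 2f. -/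
set_option maxHeartbeats 2000000

lemma cfStep_s8 (D : ℤ) (hD1 : 1 ≤ D) (hns : ¬ IsSquare D)
    (i : ℕ) (P Q a P' Q' : ℤ) (hQ : 0 < Q)
    (hx : cfX (Real.sqrt D) i = (Real.sqrt D + P) / Q)
    (hP' : P' = a * Q - P) (hQQ' : Q * Q' = D - P' ^ 2)
    (hc0 : 0 ≤ P') (hc : P' ^ 2 ≤ D)
    (hu0 : 0 < (a + 1) * Q - P) (hu : D < ((a + 1) * Q - P) ^ 2) :
    cfA (Real.sqrt D) i = a ∧
      cfX (Real.sqrt D) (i + 1) = (Real.sqrt D + P') / Q' := by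
  have hD0 : (0:ℝ) ≤ (D:ℝ) := by exact_mod_cast (by linarith : (0:ℤ) ≤ D)
  have hsq : Real.sqrt (D:ℝ) ^ 2 = (D:ℝ) := Real.sq_sqrt hD0
  have hlt : P' ^ 2 < D := lt_of_le_of_ne hc (fun h => hns ⟨P', by rw [← h]; ring⟩)
  have hPlt : (P':ℝ) < Real.sqrt D := by
    have h := Real.sqrt_lt_sqrt (by positivity : (0:ℝ) ≤ ((P':ℝ))^2)
      (by exact_mod_cast hlt : ((P':ℝ))^2 < (D:ℝ))
    rwa [Real.sqrt_sq (by exact_mod_cast hc0)] at h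
  have hup : Real.sqrt D < ((a+1)*Q - P : ℝ) := by
    have h := Real.sqrt_lt_sqrt hD0
      (by exact_mod_cast hu : (D:ℝ) < (((a:ℝ)+1)*Q - P)^2)
    rwa [Real.sqrt_sq (by exact_mod_cast hu0.le)] at h
  have hQR : (0:ℝ) < (Q:ℝ) := by exact_mod_cast hQ
  have hP'R : (P':ℝ) = a*Q - P := by exact_mod_cast hP'
  have hfloor : ⌊(Real.sqrt D + P)/(Q:ℝ)⌋ = a := by
    rw [Int.floor_eq_iff]
    constructor
    · rw [le_div_iff₀ hQR]; nlinarith [hPlt]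
    · rw [div_lt_iff₀ hQR]; nlinarith [hup]
  constructor
  · unfold cfA; rw [hx, hfloor]
  · have hfr : Int.fract (cfX (Real.sqrt D) i) = (Real.sqrt D - P')/Q := by
      rw [Int.fract, hx, hfloor]
      field_simp
      linarith [hP'R]
    have hQQ'R : (Q:ℝ) * Q' = (D:ℝ) - (P':ℝ)^2 := by exact_mod_cast hQQ'
    have hQ'pos : 0 < Q' := by
      have h2 : 0 < Q * Q' := by rw [hQQ']; linarith
      rcases mul_pos_iff.mp h2 with ⟨_, h⟩ | ⟨h, _⟩
      · exact h
      · linarith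
    have hQ'R : (0:ℝ) < (Q':ℝ) := by exact_mod_cast hQ'pos
    show 1 / Int.fract (cfX (Real.sqrt D) i) = _
    rw [hfr, one_div_div, div_eq_div_iff (by linarith) (by linarith)]
    linear_combination hQQ'R - hsq

theorem stmt8 (α : ℕ) (f n m : ℤ) (hf : 1 ≤ f) (hn : 1 ≤ n) (hm : 3 ≤ m)
    (hmodd : Odd m) (hdiv : 4 * f = 2 ^ α * m * n) (hfodd : Odd f) (hf3 : 3 ≤ f)
    (D : ℤ) (hD : D = f ^ 2 + 2 ^ α * n) (hns : ¬ IsSquare D) :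
    cfA (Real.sqrt D) 0 = f ∧
      ∀ i : ℕ, cfA (Real.sqrt D) (10 * i + 1) = (m - 1) / 2 ∧
        cfA (Real.sqrt D) (10 * i + 2) = 1 ∧
        cfA (Real.sqrt D) (10 * i + 3) = 1 ∧
        cfA (Real.sqrt D) (10 * i + 4) = (f - 1) / 2 ∧
        cfA (Real.sqrt D) (10 * i + 5) = 2 * m ∧
        cfA (Real.sqrt D) (10 * i + 6) = (f - 1) / 2 ∧
        cfA (Real.sqrt D) (10 * i + 7) = 1 ∧
        cfA (Real.sqrt D) (10 * i + 8) = 1 ∧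
        cfA (Real.sqrt D) (10 * i + 9) = (m - 1) / 2 ∧
        cfA (Real.sqrt D) (10 * i + 10) = 2 * f := by
  -- extract q with 2^α * n = 4 * q and f = m * q
  have hg1 : (0:ℤ) < 2 ^ α * n := by positivity
  have hcop : IsCoprime (4:ℤ) m := by
    have h2 : IsCoprime (2:ℤ) m := by
      rw [Int.prime_two.coprime_iff_not_dvd]
      rw [Int.two_dvd_ne_zero]
      rcases hmodd with ⟨j, hj⟩
      omega
    have := h2.mul_left h2
    norm_num at this
    exact this
  have h4g : (4:ℤ) ∣ 2 ^ α * n := by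
    exact hcop.dvd_of_dvd_mul_left ⟨f, by linear_combination -hdiv⟩
  obtain ⟨q, hq4⟩ := h4g
  have hq1 : 1 ≤ q := by omega
  have hfmq : f = m * q := by
    have h := hdiv
    rw [show (2:ℤ) ^ α * m * n = m * (2 ^ α * n) by ring, hq4] at h
    nlinarith [h]
  obtain ⟨j, hj'⟩ := hmodd
  have hmj : m = 2 * j + 1 := by omega
  obtain ⟨e, he'⟩ := hfodd
  have hfe : f = 2 * e + 1 := by omega
  subst hD
  rw [hq4] at hns ⊢
  subst hmj
  rw [hfmq] at hfe hns hf3 ⊢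
  clear hdiv hf hj' he' hq4 hg1
  set F : ℤ := (2 * j + 1) * q with hF
  have hq0 : (0:ℤ) ≤ q := by linarith
  have hj1 : 1 ≤ j := by omega
  have hF3q : 3*q ≤ F := by rw [hF]; nlinarith [hj1, hq1]
  have hD1 : (1:ℤ) ≤ F^2 + 4*q := by nlinarith [sq_nonneg F, hq1]
  have S : ∀ k : ℕ, cfX (Real.sqrt ((F^2+4*q : ℤ) : ℝ)) k = ((Real.sqrt ((F^2+4*q : ℤ) : ℝ)) + (F:ℝ)) / ((4*q : ℤ) : ℝ) →
      (cfA (Real.sqrt ((F^2+4*q : ℤ) : ℝ)) k = j ∧ cfA (Real.sqrt ((F^2+4*q : ℤ) : ℝ)) (k+1) = 1 ∧ cfA (Real.sqrt ((F^2+4*q : ℤ) : ℝ)) (k+2) = 1 ∧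
       cfA (Real.sqrt ((F^2+4*q : ℤ) : ℝ)) (k+3) = e ∧ cfA (Real.sqrt ((F^2+4*q : ℤ) : ℝ)) (k+4) = 2*(2*j+1) ∧ cfA (Real.sqrt ((F^2+4*q : ℤ) : ℝ)) (k+5) = e ∧
       cfA (Real.sqrt ((F^2+4*q : ℤ) : ℝ)) (k+6) = 1 ∧ cfA (Real.sqrt ((F^2+4*q : ℤ) : ℝ)) (k+7) = 1 ∧ cfA (Real.sqrt ((F^2+4*q : ℤ) : ℝ)) (k+8) = j ∧
       cfA (Real.sqrt ((F^2+4*q : ℤ) : ℝ)) (k+9) = 2*F) ∧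
      cfX (Real.sqrt ((F^2+4*q : ℤ) : ℝ)) (k+10) = ((Real.sqrt ((F^2+4*q : ℤ) : ℝ)) + (F:ℝ)) / ((4*q : ℤ) : ℝ) := by
    intro k hk
    obtain ⟨b1, h1⟩ := cfStep_s8 (F^2+4*q) hD1 hns k F (4*q) j (F-2*q) (F+1-q)
      (by linarith) hk (by linear_combination 2*hF) (by ring)
      (by linarith) (by nlinarith [mul_nonneg hq0 (by linarith : (0:ℤ) ≤ F + 1 - q)])
      (by have h : (j+1)*(4*q) - F = F + 2*q := by linear_combination -2*hF
          rw [h]; linarith)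
      (by have h : (j+1)*(4*q) - F = F + 2*q := by linear_combination -2*hF
          rw [h]; nlinarith [mul_pos (show (0:ℤ) < q by linarith) (show (0:ℤ) < F + q - 1 by linarith)])
    obtain ⟨b2, h2⟩ := cfStep_s8 (F^2+4*q) hD1 hns (k+1) (F-2*q) (F+1-q) 1 (q+1) (F+q-1)
      (by linarith) h1 (by ring) (by ring) (by linarith)
      (by nlinarith [mul_nonneg (by linarith : (0:ℤ) ≤ F-3*q) (by linarith : (0:ℤ) ≤ F+3*q)])
      (by linarith) (by nlinarith)
    obtain ⟨b3, h3⟩ := cfStep_s8 (F^2+4*q) hD1 hns (k+2) (q+1) (F+q-1) 1 (F-2) 4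
      (by linarith) h2 (by ring) (by ring) (by linarith) (by nlinarith)
      (by linarith)
      (by nlinarith [mul_nonneg hq0 (by linarith : (0:ℤ) ≤ 4*F+q-10),
            mul_nonneg (by linarith : (0:ℤ) ≤ F-1) (by linarith : (0:ℤ) ≤ F-3)])
    obtain ⟨b4, h4⟩ := cfStep_s8 (F^2+4*q) hD1 hns (k+3) (F-2) 4 e F q
      (by norm_num) h3 (by linear_combination 2*hfe) (by ring) (by linarith) (by nlinarith)
      (by have h : (e+1)*4 - (F-2) = F + 4 := by linear_combination -2*hfe
          rw [h]; linarith)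
      (by have h : (e+1)*4 - (F-2) = F + 4 := by linear_combination -2*hfe
          rw [h]; nlinarith)
    obtain ⟨b5, h5⟩ := cfStep_s8 (F^2+4*q) hD1 hns (k+4) F q (2*(2*j+1)) F 4
      (by linarith) h4 (by linear_combination 2*hF) (by ring) (by linarith) (by nlinarith)
      (by have h : (2*(2*j+1)+1)*q - F = F + q := by linear_combination -2*hF
          rw [h]; linarith)
      (by have h : (2*(2*j+1)+1)*q - F = F + q := by linear_combination -2*hF
          rw [h]; nlinarith [mul_pos (show (0:ℤ) < q by linarith) (show (0:ℤ) < 2*F + q - 4 by linarith)])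
    obtain ⟨b6, h6⟩ := cfStep_s8 (F^2+4*q) hD1 hns (k+5) F 4 e (F-2) (F+q-1)
      (by norm_num) h5 (by linear_combination 2*hfe) (by ring) (by linarith) (by nlinarith)
      (by have h : (e+1)*4 - F = F + 2 := by linear_combination -2*hfe
          rw [h]; linarith)
      (by have h : (e+1)*4 - F = F + 2 := by linear_combination -2*hfe
          rw [h]; nlinarith)
    obtain ⟨b7, h7⟩ := cfStep_s8 (F^2+4*q) hD1 hns (k+6) (F-2) (F+q-1) 1 (q+1) (F+1-q)
      (by linarith) h6 (by ring) (by ring) (by linarith)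
      (by nlinarith [mul_nonneg (by linarith : (0:ℤ) ≤ F-3*q) (by linarith : (0:ℤ) ≤ F+3*q)])
      (by linarith)
      (by nlinarith [mul_pos (show (0:ℤ) < q by linarith) (show (0:ℤ) < F + q - 1 by linarith)])
    obtain ⟨b8, h8⟩ := cfStep_s8 (F^2+4*q) hD1 hns (k+7) (q+1) (F+1-q) 1 (F-2*q) (4*q)
      (by linarith) h7 (by ring) (by ring) (by linarith)
      (by nlinarith [mul_nonneg hq0 (by linarith : (0:ℤ) ≤ F + 1 - q)])
      (by linarith)
      (by nlinarith [mul_nonneg (by linarith : (0:ℤ) ≤ F-3*q) (by linarith : (0:ℤ) ≤ F-q)])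
    obtain ⟨b9, h9⟩ := cfStep_s8 (F^2+4*q) hD1 hns (k+8) (F-2*q) (4*q) j F 1
      (by linarith) h8 (by linear_combination 2*hF) (by ring) (by linarith) (by nlinarith)
      (by have h : (j+1)*(4*q) - (F-2*q) = F + 4*q := by linear_combination -2*hF
          rw [h]; linarith)
      (by have h : (j+1)*(4*q) - (F-2*q) = F + 4*q := by linear_combination -2*hF
          rw [h]; nlinarith [mul_pos (show (0:ℤ) < q by linarith) (show (0:ℤ) < 8*F + 16*q - 4 by linarith)])
    obtain ⟨b10, h10⟩ := cfStep_s8 (F^2+4*q) hD1 hns (k+9) F 1 (2*F) F (4*q)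
      (by norm_num) h9 (by ring) (by ring) (by linarith) (by nlinarith)
      (by linarith) (by nlinarith)
    exact ⟨⟨b1, b2, b3, b4, b5, b6, b7, b8, b9, b10⟩, h10⟩
  obtain ⟨hA0, hX1⟩ := cfStep_s8 (F^2+4*q) hD1 hns 0 0 1 F F (4*q)
    (by norm_num) (by simp [cfX]) (by ring) (by ring) (by linarith) (by nlinarith)
    (by linarith) (by nlinarith)
  have inv : ∀ i : ℕ, cfX (Real.sqrt ((F^2+4*q : ℤ) : ℝ)) (10*i+1) = ((Real.sqrt ((F^2+4*q : ℤ) : ℝ)) + (F:ℝ)) / ((4*q : ℤ) : ℝ) := by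
    intro i
    induction i with
    | zero => exact hX1
    | succ i ih =>
      have h := (S _ ih).2
      have he10 : 10*(i+1)+1 = (10*i+1)+10 := by ring
      rw [he10]; exact h
  refine ⟨hA0, fun i => ?_⟩
  obtain ⟨⟨b1, b2, b3, b4, b5, b6, b7, b8, b9, b10⟩, -⟩ := S (10*i+1) (inv i)
  refine ⟨?_, b2, b3, ?_, b5, ?_, b7, b8, ?_, b10⟩
  · rw [show (2*j+1-1)/2 = j by omega]; exact b1
  · rw [show (F-1)/2 = e by omega]; exact b4
  · rw [show (F-1)/2 = e by omega]; exact b6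
  · rw [show (2*j+1-1)/2 = j by omega]; exact b9
end

section
/- Let α ≥ 0 and f, n ≥ 1 be integers, let m ≥ 3 be an odd integer, assume 4·f = 2^α·m·n, that f is odd with f ≥ 3, and set D = f² + 2^α·n. Assume D is not a perfect square. Then, writing t = f·m, the pair (X, Y) = (t·(t+3)²/2 + 1, m·(t+1)·(t+3)/2) is the fundamental solution of the Pell equation X² − D·Y² = 1; that is, X² − D·Y² = 1 and every pair of positive integers (x, y) with x² − D·y² = 1 satisfies Y ≤ y. -/
/-- No solution of `v^2 - D w^2 = 4` with `0 < w < m`, where `D = f^2 + e`, `m*e = 4*f`. -/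
private lemma pell_keyA (f m e D v w : ℤ) (hf3 : 3 ≤ f) (hm : 3 ≤ m) (hmodd : Odd m)
    (hepos : 0 < e) (hdm : m * e = 4 * f) (hD : D = f ^ 2 + e)
    (hv : 0 < v) (hw : 0 < w) (hwm : w < m) (hvw : v ^ 2 = D * w ^ 2 + 4) : False := by
  have hvw' : v ^ 2 = (f ^ 2 + e) * w ^ 2 + 4 := by rw [← hD]; exact hvw
  have hfw : f * w < v := by
    by_contra hle
    push_neg at hle
    have h1 : v * v ≤ (f * w) * (f * w) :=
      mul_le_mul hle hle (by linarith) (by nlinarith)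
    nlinarith [hvw', h1, mul_pos hepos (mul_pos hw hw)]
  have hr1 : 1 ≤ v - f * w := by
    have := Int.add_one_le_iff.mpr hfw
    linarith
  obtain ⟨r, hrdef⟩ : ∃ r : ℤ, r = v - f * w := ⟨_, rfl⟩
  rw [← hrdef] at hr1
  have hv' : v = f * w + r := by linarith
  have hsimp : 2 * (f * w) * r + r ^ 2 = e * w ^ 2 + 4 := by
    have hvw'' : (f * w + r) ^ 2 = (f ^ 2 + e) * w ^ 2 + 4 := by rw [← hv']; exact hvw'
    linear_combination hvw''
  have hkey : 2 * (f * w) * (m * r - 2 * w) = m * (4 - r ^ 2) := by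
    linear_combination m * hsimp + w ^ 2 * hdm
  rcases eq_or_lt_of_le hr1 with h1 | h2
  · rw [← h1] at hkey
    have hk1 : 2 * (f * w * (m - 2 * w)) = 3 * m := by linear_combination hkey
    have hdvd : (2:ℤ) ∣ 3 * m := ⟨f * w * (m - 2 * w), by linarith⟩
    obtain ⟨j, hj⟩ := hmodd
    omega
  · have hr2 : 2 ≤ r := by omega
    have hfw0 : 0 < f * w := mul_pos (by linarith) hw
    have hmr : 2 ≤ m * r - 2 * w := by
      have := mul_le_mul_of_nonneg_left hr2 (show (0:ℤ) ≤ m by linarith)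
      linarith
    have hr4 : 4 ≤ r ^ 2 := by nlinarith [hr2]
    have hlhs : 0 < 2 * (f * w) * (m * r - 2 * w) :=
      mul_pos (by linarith) (by linarith)
    have hnn : 0 ≤ m * (r ^ 2 - 4) :=
      mul_nonneg (by linarith) (by linarith)
    nlinarith [hkey, hlhs, hnn]

/-- Descent: divide a solution of `a^2 - D b^2 = 4` by the unit `((t+2) + m √D)/2`. -/
private lemma pell_step (t m D a b : ℤ) (hm : 3 ≤ m) (ht9 : 9 ≤ t) (hmodd : Odd m)
    (huodd : Odd (t + 2)) (hDodd : Odd D) (hDpos : 0 < D)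
    (hDm : D * m ^ 2 = (t + 2) ^ 2 - 4)
    (ha : 0 < a) (hb : m < b) (hab : a ^ 2 = D * b ^ 2 + 4) :
    ∃ a' b', a' ^ 2 = D * b' ^ 2 + 4 ∧ 0 < a' ∧ 0 ≤ b' ∧ 2 * b = (t + 2) * b' + m * a' := by
  have hpar : Even (a - b) := by
    rcases Int.even_or_odd a with ha' | ha' <;> rcases Int.even_or_odd b with hb' | hb'
    · exact ha'.sub hb'
    · exfalso
      have h1 : Odd (D * b ^ 2 + 4) := (hDodd.mul hb'.pow).add_even ⟨2, by norm_num⟩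
      rw [← hab] at h1
      have h2 : Even (a ^ 2) := by rw [sq]; exact ha'.mul_right a
      exact (Int.not_odd_iff_even.mpr h2) h1
    · exfalso
      have hb2 : Even (b ^ 2) := by rw [sq]; exact hb'.mul_right b
      have h1 : Even (D * b ^ 2 + 4) := (hb2.mul_left D).add ⟨2, by norm_num⟩
      rw [← hab] at h1
      exact (Int.not_odd_iff_even.mpr h1) ha'.pow
    · exact ha'.sub_odd hb'
  obtain ⟨c, hc⟩ := hpar
  have hev1 : Even ((t + 2) * a - D * m * b) := by
    have h1 : Even ((t + 2) * (a - b)) := Even.mul_left ⟨c, hc⟩ _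
    have h2 : Even (((t + 2) - D * m) * b) := (huodd.sub_odd (hDodd.mul hmodd)).mul_right b
    have h3 : (t + 2) * a - D * m * b = (t + 2) * (a - b) + ((t + 2) - D * m) * b := by ring
    rw [h3]; exact h1.add h2
  have hev2 : Even ((t + 2) * b - m * a) := by
    have h1 : Even ((t + 2) * (b - a)) := Even.mul_left ⟨-c, by linarith⟩ _
    have h2 : Even (((t + 2) - m) * a) := (huodd.sub_odd hmodd).mul_right a
    have h3 : (t + 2) * b - m * a = (t + 2) * (b - a) + ((t + 2) - m) * a := by ring
    rw [h3]; exact h1.add h2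
  obtain ⟨a', ha'⟩ := hev1
  obtain ⟨b', hb'⟩ := hev2
  have ha'2 : (t + 2) * a - D * m * b = 2 * a' := by linarith
  have hb'2 : (t + 2) * b - m * a = 2 * b' := by linarith
  have hnorm : a' ^ 2 = D * b' ^ 2 + 4 := by
    have h4 : (4:ℤ) * a' ^ 2 = 4 * (D * b' ^ 2 + 4) := by
      linear_combination ((t + 2) ^ 2 - D * m ^ 2) * hab - 4 * hDm -
        ((t + 2) * a - D * m * b + 2 * a') * ha'2 +
        D * ((t + 2) * b - m * a + 2 * b') * hb'2
    exact mul_left_cancel₀ (by norm_num : (4:ℤ) ≠ 0) h4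
  have hapos : 0 < a' := by
    have hkey : ((t + 2) * a) ^ 2 = (D * m * b) ^ 2 + 4 * a ^ 2 + 4 * (D * m ^ 2) := by
      linear_combination (D * m ^ 2) * hab - a ^ 2 * hDm
    have h5 : 0 < D * m * b := mul_pos (mul_pos hDpos (by linarith)) (by linarith)
    have h6 : 0 < (t + 2) * a := mul_pos (by linarith) ha
    have h7 : D * m * b < (t + 2) * a := by
      nlinarith [hkey, h5, h6, pow_pos ha 2,
        mul_pos hDpos (mul_pos (show (0:ℤ) < m by linarith) (show (0:ℤ) < m by linarith))]
    linarith [ha'2, h7]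
  have hbnn : 0 ≤ b' := by
    have hkey2 : ((t + 2) * b) ^ 2 = (m * a) ^ 2 + 4 * b ^ 2 - 4 * m ^ 2 := by
      linear_combination (-(m ^ 2)) * hab - b ^ 2 * hDm
    have h5 : 0 < m * a := mul_pos (by linarith) ha
    have h6 : 0 < (t + 2) * b := mul_pos (by linarith) (by linarith)
    have h7 : m * a ≤ (t + 2) * b := by
      nlinarith [hkey2, h5, h6, hb, hm, show (0:ℤ) < b + m by linarith]
    linarith [hb'2, h7]
  refine ⟨a', b', hnorm, hapos, hbnn, ?_⟩
  have h8 : (2:ℤ) * (2 * b) = 2 * ((t + 2) * b' + m * a') := by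
    linear_combination (t + 2) * hb'2 + m * ha'2 + b * hDm
  exact mul_left_cancel₀ two_ne_zero h8

/-- If `b1 ≥ (t+2)*m` then the corresponding combination is large. -/
private lemma pell_bound1 (t m D a1 b1 : ℤ) (hm : 3 ≤ m) (ht9 : 9 ≤ t) (hDpos : 0 < D)
    (hDm : D * m ^ 2 = (t + 2) ^ 2 - 4) (ha1 : 0 < a1) (hab1 : a1 ^ 2 = D * b1 ^ 2 + 4)
    (hge : (t + 2) * m ≤ b1) :
    2 * (m * ((t + 2) ^ 2 - 1)) ≤ (t + 2) * b1 + m * a1 := by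
  have hump : 0 < (t + 2) * m := mul_pos (by linarith) (by linarith)
  have hq1 : ((t + 2) * m) ^ 2 ≤ b1 ^ 2 := by nlinarith [hge, hump]
  have hq2 : (t + 2) ^ 2 * ((t + 2) ^ 2 - 4) + 4 ≤ a1 ^ 2 := by
    have hmono : D * ((t + 2) * m) ^ 2 ≤ D * b1 ^ 2 :=
      mul_le_mul_of_nonneg_left hq1 hDpos.le
    have he : D * ((t + 2) * m) ^ 2 = (t + 2) ^ 2 * ((t + 2) ^ 2 - 4) := by
      linear_combination (t + 2) ^ 2 * hDm
    linarith [hab1]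
  have hpos : 0 < (t + 2) ^ 2 - 2 + a1 := by
    nlinarith [ha1, mul_le_mul (show (11:ℤ) ≤ t + 2 by linarith)
      (show (11:ℤ) ≤ t + 2 by linarith) (by norm_num) (by linarith)]
  have hq3 : (t + 2) ^ 2 - 2 ≤ a1 := by nlinarith [hq2, hpos]
  have hq4 : (t + 2) * ((t + 2) * m) ≤ (t + 2) * b1 :=
    mul_le_mul_of_nonneg_left hge (by linarith)
  have hq5 : m * ((t + 2) ^ 2 - 2) ≤ m * a1 :=
    mul_le_mul_of_nonneg_left hq3 (by linarith)
  nlinarith [hq4, hq5]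

/-- If `b2 ≥ m` then the corresponding combination is at least `2*(t+2)*m`. -/
private lemma pell_bound2 (t m D a2 b2 : ℤ) (hm : 3 ≤ m) (ht9 : 9 ≤ t) (hDpos : 0 < D)
    (hDm : D * m ^ 2 = (t + 2) ^ 2 - 4) (ha2 : 0 < a2) (hab2 : a2 ^ 2 = D * b2 ^ 2 + 4)
    (hge : m ≤ b2) :
    2 * ((t + 2) * m) ≤ (t + 2) * b2 + m * a2 := by
  have hq1 : m ^ 2 ≤ b2 ^ 2 := by nlinarith [hge, hm]
  have hq2 : (t + 2) ^ 2 ≤ a2 ^ 2 := by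
    have hmono := mul_le_mul_of_nonneg_left hq1 hDpos.le
    linarith [hab2, hDm, hmono]
  have hpos : 0 < (t + 2) + a2 := by linarith
  have hq3 : t + 2 ≤ a2 := by nlinarith [hq2, hpos]
  have hq4 : (t + 2) * m ≤ (t + 2) * b2 :=
    mul_le_mul_of_nonneg_left hge (by linarith)
  have hq5 : m * (t + 2) ≤ m * a2 :=
    mul_le_mul_of_nonneg_left hq3 (by linarith)
  nlinarith [hq4, hq5]

/-- From `a^2 = 4` and `a > 0`, conclude `a = 2`. -/
private lemma pell_sq4 (a : ℤ) (ha : 0 < a) (h : a ^ 2 = 4) : a = 2 := by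
  have hf0 : (a - 2) * (a + 2) = 0 := by linear_combination h
  rcases mul_eq_zero.mp hf0 with h' | h'
  · linarith
  · linarith

/-- From `a^2 = u^2`, `a > 0`, `u > 0`, conclude `a = u`. -/
private lemma pell_sqeq (a u : ℤ) (ha : 0 < a) (hu : 0 < u) (h : a ^ 2 = u ^ 2) : a = u := by
  have hf0 : (a - u) * (a + u) = 0 := by linear_combination h
  rcases mul_eq_zero.mp hf0 with h' | h'
  · linarith
  · linarith

set_option maxHeartbeats 1000000 in
theorem stmt9 (α : ℕ) (f n m : ℤ) (hf : 1 ≤ f) (hn : 1 ≤ n) (hm : 3 ≤ m)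
    (hmodd : Odd m) (hdiv : 4 * f = 2 ^ α * m * n) (hfodd : Odd f) (hf3 : 3 ≤ f)
    (D : ℤ) (hD : D = f ^ 2 + 2 ^ α * n) (hns : ¬ IsSquare D)
    (t : ℤ) (ht : t = f * m) :
    (t * (t + 3) ^ 2 / 2 + 1) ^ 2 - D * (m * (t + 1) * (t + 3) / 2) ^ 2 = 1 ∧
      ∀ x y : ℤ, 0 < x → 0 < y → x ^ 2 - D * y ^ 2 = 1 → m * (t + 1) * (t + 3) / 2 ≤ y := by
  have hdm : m * (2 ^ α * n) = 4 * f := by linear_combination - hdiv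
  have hdpos : 0 < 2 ^ α * n := mul_pos (pow_pos (by norm_num) α) (by linarith)
  have htodd : Odd t := by rw [ht]; exact hfodd.mul hmodd
  obtain ⟨k0, hk0⟩ := htodd
  obtain ⟨s, hs⟩ : ∃ s : ℤ, t + 3 = 2 * s := ⟨k0 + 2, by omega⟩
  have ht9 : 9 ≤ t := by
    have h33 : (3:ℤ) * 3 ≤ f * m := mul_le_mul hf3 hm (by norm_num) (by linarith)
    rw [ht]; linarith only [h33]
  have hs6 : 6 ≤ s := by omega
  have huodd : Odd (t + 2) := ⟨k0 + 1, by omega⟩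
  have hDm : D * m ^ 2 = (t + 2) ^ 2 - 4 := by
    rw [hD, ht]; linear_combination (-m) * hdiv
  have hDpos : 0 < D := by rw [hD]; nlinarith [sq_nonneg f, hdpos]
  have hDodd : Odd D := by
    have hsq : Odd ((t + 2) ^ 2) := huodd.pow
    obtain ⟨c, hc⟩ := hsq
    have h1 : Odd ((t + 2) ^ 2 - 4) := ⟨c - 2, by omega⟩
    rw [← hDm] at h1
    exact (Int.odd_mul.mp h1).1
  have e1 : t * (t + 3) ^ 2 / 2 = 2 * t * s ^ 2 := by
    rw [hs, show t * (2 * s) ^ 2 = 2 * t * s ^ 2 * 2 by ring]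
    exact Int.mul_ediv_cancel _ two_ne_zero
  have e2 : m * (t + 1) * (t + 3) / 2 = m * (t + 1) * s := by
    rw [hs, show m * (t + 1) * (2 * s) = m * (t + 1) * s * 2 by ring]
    exact Int.mul_ediv_cancel _ two_ne_zero
  constructor
  · rw [e1, e2]
    have hDm' : D * m ^ 2 = 4 * s ^ 2 - 4 * s - 3 := by
      rw [hDm, show t = 2 * s - 3 by omega]; ring
    rw [show t = 2 * s - 3 by omega]
    linear_combination (-(4 * s ^ 2 * (s - 1) ^ 2)) * hDm'
  · intro x y hx hy hxy
    rw [e2]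
    by_contra hcon
    push_neg at hcon
    obtain ⟨a, hadef⟩ : ∃ a : ℤ, a = 2 * x := ⟨_, rfl⟩
    obtain ⟨b, hbdef⟩ : ∃ b : ℤ, b = 2 * y := ⟨_, rfl⟩
    have hab : a ^ 2 = D * b ^ 2 + 4 := by rw [hadef, hbdef]; linear_combination 4 * hxy
    have hapos : 0 < a := by omega
    have hbpos : 0 < b := by omega
    have hblt : b < m * ((t + 2) ^ 2 - 1) := by
      have h1 : m * ((t + 2) ^ 2 - 1) = 4 * (m * (s * (s - 1))) := by
        rw [show t = 2 * s - 3 by omega]; ring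
      have h2 : m * (t + 1) * s = 2 * (m * (s * (s - 1))) := by
        rw [show t = 2 * s - 3 by omega]; ring
      rw [h1]; rw [h2] at hcon
      linarith only [hcon, hbdef]
    rcases lt_trichotomy b m with hbm | hbm | hbm
    · exact pell_keyA f m (2 ^ α * n) D a b hf3 hm hmodd hdpos hdm hD hapos hbpos hbm hab
    · rw [hbm] at hab
      have h1 : a ^ 2 = (t + 2) ^ 2 := by linarith only [hab, hDm]
      have h2 : Odd (a ^ 2) := by rw [h1]; exact huodd.pow
      have h3 : Even (a ^ 2) := by rw [hadef]; exact ⟨2 * x ^ 2, by ring⟩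
      exact (Int.not_odd_iff_even.mpr h3) h2
    · obtain ⟨a1, b1, hab1, ha1, hb1n, hinv1⟩ :=
        pell_step t m D a b hm ht9 hmodd huodd hDodd hDpos hDm hapos hbm hab
      have hb1u : b1 < (t + 2) * m := by
        by_contra hge
        push_neg at hge
        have := pell_bound1 t m D a1 b1 hm ht9 hDpos hDm ha1 hab1 hge
        linarith only [this, hinv1, hblt]
      rcases hb1n.eq_or_lt with hb10 | hb10
      · rw [← hb10] at hab1 hinv1
        have ha12 : a1 ^ 2 = 4 := by linarith only [hab1]
        have ha1eq : a1 = 2 := pell_sq4 a1 ha1 ha12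
        rw [ha1eq] at hinv1
        linarith only [hinv1, hbm]
      · rcases lt_trichotomy b1 m with hb1m | hb1m | hb1m
        · exact pell_keyA f m (2 ^ α * n) D a1 b1 hf3 hm hmodd hdpos hdm hD ha1 hb10 hb1m hab1
        · rw [hb1m] at hab1 hinv1
          have h1 : a1 ^ 2 = (t + 2) ^ 2 := by linarith only [hab1, hDm]
          have ha1u : a1 = t + 2 := pell_sqeq a1 (t + 2) ha1 (by linarith) h1
          rw [ha1u] at hinv1
          have hbeq : b = (t + 2) * m := by linarith only [hinv1]
          have hodd : Odd ((t + 2) * m) := huodd.mul hmodd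
          rw [← hbeq] at hodd
          obtain ⟨c, hc⟩ := hodd
          omega
        · obtain ⟨a2, b2, hab2, ha2, hb2n, hinv2⟩ :=
            pell_step t m D a1 b1 hm ht9 hmodd huodd hDodd hDpos hDm ha1 hb1m hab1
          have hb2m : b2 < m := by
            by_contra hge
            push_neg at hge
            have := pell_bound2 t m D a2 b2 hm ht9 hDpos hDm ha2 hab2 hge
            linarith only [this, hinv2, hb1u]
          rcases hb2n.eq_or_lt with hb20 | hb20
          · rw [← hb20] at hab2 hinv2
            have ha22 : a2 ^ 2 = 4 := by linarith only [hab2]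
            have ha2eq : a2 = 2 := pell_sq4 a2 ha2 ha22
            rw [ha2eq] at hinv2
            linarith only [hinv2, hb1m]
          · exact pell_keyA f m (2 ^ α * n) D a2 b2 hf3 hm hmodd hdpos hdm hD ha2 hb20 hb2m hab2
end

section
/- Let α ≥ 0 and f, n ≥ 1 be integers, let m ≥ 5 be an odd integer, assume 4·f = 2^α·m·n, that f is odd with f ≥ 5, and set D = f² − 2^α·n. Assume D is not a perfect square. Then the simple continued fraction expansion of √D is periodic with a₀ = ⌊√D⌋ = f−1 and period of length 12: for every integer i ≥ 0, a_{12i+1} = 1, a_{12i+2} = (m−3)/2, a_{12i+3} = 2, a_{12i+4} = (f−3)/2, a_{12i+5} = 1, a_{12i+6} = 2(m−1), a_{12i+7} = 1, a_{12i+8} = (f−3)/2, a_{12i+9} = 2, a_{12i+10} = (m−3)/2, a_{12i+11} = 1, a_{12i+12} = 2(f−1). -/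
lemma surd_step (D P Q a P' Q' : ℤ) (hD : 0 < D) (hQ : 0 < Q) (hQ' : 0 < Q')
    (hP' : a * Q - P = P') (h2 : D < (P' + Q)^2) (h3 : 0 < P' + Q)
    (heq : D - P'^2 = Q * Q') :
    ⌊(Real.sqrt D + P)/Q⌋ = a ∧
    1 / Int.fract ((Real.sqrt D + P)/Q) = (Real.sqrt D + P')/Q' := by
  set s := Real.sqrt (D:ℝ) with hs
  have hs2 : s^2 = (D:ℝ) := Real.sq_sqrt (by exact_mod_cast hD.le)
  have hP2 : (P':ℝ)^2 < (D:ℝ) := by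
    have : P'^2 < D := by nlinarith [mul_pos hQ hQ']
    exact_mod_cast this
  have hsq : (P':ℝ) < s := by
    rcases le_or_gt 0 (P':ℝ) with h | h
    · exact (Real.lt_sqrt h).mpr hP2
    · exact h.trans_le (Real.sqrt_nonneg _)
  have hub : s < (P':ℝ) + Q := by
    rw [hs]
    refine (Real.sqrt_lt' (by exact_mod_cast h3)).mpr ?_
    exact_mod_cast (by exact_mod_cast h2 : (D:ℝ) < ((P':ℝ) + Q)^2)
  have hQr : (0:ℝ) < (Q:ℝ) := by exact_mod_cast hQ
  have hQ'r : (0:ℝ) < (Q':ℝ) := by exact_mod_cast hQ'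
  have hP'r : (a:ℝ) * Q - P = P' := by exact_mod_cast hP'
  have hfl : ⌊(s + P)/Q⌋ = a := by
    rw [Int.floor_eq_iff]
    constructor
    · rw [le_div_iff₀ hQr]; nlinarith
    · rw [div_lt_iff₀ hQr]; nlinarith
  refine ⟨hfl, ?_⟩
  rw [Int.fract, hfl]
  have key : (s + P)/Q - a = (s - P')/Q := by field_simp; linarith
  rw [key, one_div_div]
  rw [div_eq_div_iff (by linarith) (by linarith)]
  have : ((D:ℝ) - (P':ℝ)^2) = (Q:ℝ) * Q' := by exact_mod_cast heq
  nlinarith [this, hs2]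

lemma cfbounds (f t : ℤ) (ht : 1 ≤ t) (hf5t : 5*t ≤ f) :
    (0 < f^2 - 4*t) ∧
    (f^2 - 4*t < ((f - 1) + (1))^2) ∧
    (f^2 - 4*t < ((f - 4*t) + (2*f - 4*t - 1))^2) ∧
    (f^2 - 4*t < ((f - 2*t) + (4*t))^2) ∧
    (f^2 - 4*t < ((f - 2) + (f - t - 1))^2) ∧
    (f^2 - 4*t < ((f - 4) + (4))^2) ∧
    (f^2 - 4*t < ((f - t) + (2*f - t - 4))^2) ∧
    (f^2 - 4*t < ((f - t) + (t))^2) ∧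
    (f^2 - 4*t < ((f - 4) + (2*f - t - 4))^2) ∧
    (f^2 - 4*t < ((f - 2) + (4))^2) ∧
    (f^2 - 4*t < ((f - 2*t) + (f - t - 1))^2) ∧
    (f^2 - 4*t < ((f - 4*t) + (4*t))^2) ∧
    (f^2 - 4*t < ((f - 1) + (2*f - 4*t - 1))^2) := by
  refine ⟨by nlinarith [ht, hf5t, mul_nonneg (by linarith : (0:ℤ) ≤ f - 5*t) (by linarith : (0:ℤ) ≤ t - 1), mul_self_nonneg (t-1), mul_self_nonneg (f-5*t)], by nlinarith [ht, hf5t, mul_nonneg (by linarith : (0:ℤ) ≤ f - 5*t) (by linarith : (0:ℤ) ≤ t - 1), mul_self_nonneg (t-1), mul_self_nonneg (f-5*t)], by nlinarith [ht, hf5t, mul_nonneg (by linarith : (0:ℤ) ≤ f - 5*t) (by linarith : (0:ℤ) ≤ t - 1), mul_self_nonneg (t-1), mul_self_nonneg (f-5*t)], by nlinarith [ht, hf5t, mul_nonneg (by linarith : (0:ℤ) ≤ f - 5*t) (by linarith : (0:ℤ) ≤ t - 1), mul_self_nonneg (t-1), mul_self_nonneg (f-5*t)], by nlinarith [ht, hf5t,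 mul_nonneg (by linarith : (0:ℤ) ≤ f - 5*t) (by linarith : (0:ℤ) ≤ t - 1), mul_self_nonneg (t-1), mul_self_nonneg (f-5*t)], by nlinarith [ht, hf5t, mul_nonneg (by linarith : (0:ℤ) ≤ f - 5*t) (by linarith : (0:ℤ) ≤ t - 1), mul_self_nonneg (t-1), mul_self_nonneg (f-5*t)], by nlinarith [ht, hf5t, mul_nonneg (by linarith : (0:ℤ) ≤ f - 5*t) (by linarith : (0:ℤ) ≤ t - 1), mul_self_nonneg (t-1), mul_self_nonneg (f-5*t)], by nlinarith [ht, hf5t, mul_nonneg (by linarith : (0:ℤ) ≤ f - 5*t) (by linarith : (0:ℤ) ≤ t - 1), mul_self_nonneg (t-1), mul_self_nonneg (f-5*t)], by nlinarith [ht, hf5t, mul_nonneg (by linarith : (0:ℤ) ≤ f - 5*t) (by linarith : (0:ℤ) ≤ t - 1), mul_self_nonneg (t-1), mul_self_nonneg (f-5*t)], by nlinarith [ht, hf5t, mul_nonneg (by linarith : (0:ℤ) ≤ f - 5*t) (by linarith : (0:ℤ) ≤ t - 1), mul_self_nonneg (t-1), mul_self_nonneg (f-5*t)], by nlinarith [ht,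 hf5t, mul_nonneg (by linarith : (0:ℤ) ≤ f - 5*t) (by linarith : (0:ℤ) ≤ t - 1), mul_self_nonneg (t-1), mul_self_nonneg (f-5*t)], by nlinarith [ht, hf5t, mul_nonneg (by linarith : (0:ℤ) ≤ f - 5*t) (by linarith : (0:ℤ) ≤ t - 1), mul_self_nonneg (t-1), mul_self_nonneg (f-5*t)], by nlinarith [ht, hf5t, mul_nonneg (by linarith : (0:ℤ) ≤ f - 5*t) (by linarith : (0:ℤ) ≤ t - 1), mul_self_nonneg (t-1), mul_self_nonneg (f-5*t)]⟩

set_option maxHeartbeats 1600000 in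
theorem stmt10 (α : ℕ) (f n m : ℤ) (hf : 1 ≤ f) (hn : 1 ≤ n) (hm : 5 ≤ m)
    (hmodd : Odd m) (hdiv : 4 * f = 2 ^ α * m * n) (hfodd : Odd f) (hf5 : 5 ≤ f)
    (D : ℤ) (hD : D = f ^ 2 - 2 ^ α * n) (hns : ¬ IsSquare D) :
    cfA (Real.sqrt D) 0 = f - 1 ∧
      ∀ i : ℕ, cfA (Real.sqrt D) (12 * i + 1) = 1 ∧
        cfA (Real.sqrt D) (12 * i + 2) = (m - 3) / 2 ∧
        cfA (Real.sqrt D) (12 * i + 3) = 2 ∧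
        cfA (Real.sqrt D) (12 * i + 4) = (f - 3) / 2 ∧
        cfA (Real.sqrt D) (12 * i + 5) = 1 ∧
        cfA (Real.sqrt D) (12 * i + 6) = 2 * (m - 1) ∧
        cfA (Real.sqrt D) (12 * i + 7) = 1 ∧
        cfA (Real.sqrt D) (12 * i + 8) = (f - 3) / 2 ∧
        cfA (Real.sqrt D) (12 * i + 9) = 2 ∧
        cfA (Real.sqrt D) (12 * i + 10) = (m - 3) / 2 ∧
        cfA (Real.sqrt D) (12 * i + 11) = 1 ∧
        cfA (Real.sqrt D) (12 * i + 12) = 2 * (f - 1) := by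
  have hm0 : (m:ℤ) ≠ 0 := by linarith
  have h2m : ¬ (2:ℤ) ∣ m := by
    rw [← even_iff_two_dvd, ← Int.not_odd_iff_even, not_not]; exact hmodd
  have hcop2 : IsCoprime (2:ℤ) m := (Int.prime_two.coprime_iff_not_dvd).mpr h2m
  have hcop4 : IsCoprime (4:ℤ) m := by
    have := hcop2.mul_left hcop2
    norm_num at this ⊢
    exact this
  have hmdvd : m ∣ 4 * f := ⟨2 ^ α * n, by linear_combination hdiv⟩
  obtain ⟨t, hfmt⟩ : m ∣ f := (hcop4.symm.dvd_of_dvd_mul_left) hmdvd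
  have h4t : 2 ^ α * n = 4 * t := by
    have h : m * (2 ^ α * n) = m * (4 * t) := by linear_combination (-1 : ℤ) * hdiv + 4 * hfmt
    exact mul_left_cancel₀ hm0 h
  have hD4 : D = f ^ 2 - 4 * t := by rw [hD, h4t]
  have ht : 1 ≤ t := by
    have h1 : (0:ℤ) < 2 ^ α * n := by positivity
    nlinarith
  obtain ⟨r, hr⟩ := hmodd
  obtain ⟨q, hq⟩ := hfodd
  set c : ℤ := r - 1 with hcdef
  set d : ℤ := q - 1 with hddef
  have hc : m = 2 * c + 3 := by omega
  have hd : f = 2 * d + 3 := by omega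
  have hcdiv : (m - 3) / 2 = c := by omega
  have hddiv : (f - 3) / 2 = d := by omega
  have hf5t : 5 * t ≤ f := by
    have h := mul_le_mul_of_nonneg_right hm (by linarith : (0:ℤ) ≤ t)
    linarith [hfmt ▸ h]
  have hB := cfbounds f t ht hf5t
  have hD0 : 0 < D := by rw [hD4]; exact hB.1
  have hB' := hB.2
  have hU0 : D < ((f - 1) + (1))^2 := by rw [hD4]; exact hB'.1
  have s0 := surd_step D (0) (1) (f - 1) (f - 1) (2*f - 4*t - 1) hD0
    (by linarith only [ht, hf5t, hf5]) (by linarith only [ht, hf5t, hf5])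
    (by ring)
    hU0
    (by linarith only [ht, hf5t, hf5])
    (by linear_combination hD4)
  have hU1 : D < ((f - 4*t) + (2*f - 4*t - 1))^2 := by rw [hD4]; exact hB'.2.1
  have s1 := surd_step D (f - 1) (2*f - 4*t - 1) (1) (f - 4*t) (4*t) hD0
    (by linarith only [ht, hf5t, hf5]) (by linarith only [ht, hf5t, hf5])
    (by ring)
    hU1
    (by linarith only [ht, hf5t, hf5])
    (by linear_combination hD4)
  have hU2 : D < ((f - 2*t) + (4*t))^2 := by rw [hD4]; exact hB'.2.2.1
  have s2 := surd_step D (f - 4*t) (4*t) (c) (f - 2*t) (f - t - 1) hD0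
    (by linarith only [ht, hf5t, hf5]) (by linarith only [ht, hf5t, hf5])
    (by linear_combination (-2*t)*hc + (-2)*hfmt)
    hU2
    (by linarith only [ht, hf5t, hf5])
    (by linear_combination hD4)
  have hU3 : D < ((f - 2) + (f - t - 1))^2 := by rw [hD4]; exact hB'.2.2.2.1
  have s3 := surd_step D (f - 2*t) (f - t - 1) (2) (f - 2) (4) hD0
    (by linarith only [ht, hf5t, hf5]) (by linarith only [ht, hf5t, hf5])
    (by ring)
    hU3
    (by linarith only [ht, hf5t, hf5])
    (by linear_combination hD4)
  have hU4 : D < ((f - 4) + (4))^2 := by rw [hD4]; exact hB'.2.2.2.2.1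
  have s4 := surd_step D (f - 2) (4) (d) (f - 4) (2*f - t - 4) hD0
    (by linarith only [ht, hf5t, hf5]) (by linarith only [ht, hf5t, hf5])
    (by linear_combination (-2)*hd)
    hU4
    (by linarith only [ht, hf5t, hf5])
    (by linear_combination hD4)
  have hU5 : D < ((f - t) + (2*f - t - 4))^2 := by rw [hD4]; exact hB'.2.2.2.2.2.1
  have s5 := surd_step D (f - 4) (2*f - t - 4) (1) (f - t) (t) hD0
    (by linarith only [ht, hf5t, hf5]) (by linarith only [ht, hf5t, hf5])
    (by ring)
    hU5
    (by linarith only [ht, hf5t, hf5])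
    (by linear_combination hD4)
  have hU6 : D < ((f - t) + (t))^2 := by rw [hD4]; exact hB'.2.2.2.2.2.2.1
  have s6 := surd_step D (f - t) (t) (2*m - 2) (f - t) (2*f - t - 4) hD0
    (by linarith only [ht, hf5t, hf5]) (by linarith only [ht, hf5t, hf5])
    (by linear_combination (-2)*hfmt)
    hU6
    (by linarith only [ht, hf5t, hf5])
    (by linear_combination hD4)
  have hU7 : D < ((f - 4) + (2*f - t - 4))^2 := by rw [hD4]; exact hB'.2.2.2.2.2.2.2.1
  have s7 := surd_step D (f - t) (2*f - t - 4) (1) (f - 4) (4) hD0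
    (by linarith only [ht, hf5t, hf5]) (by linarith only [ht, hf5t, hf5])
    (by ring)
    hU7
    (by linarith only [ht, hf5t, hf5])
    (by linear_combination hD4)
  have hU8 : D < ((f - 2) + (4))^2 := by rw [hD4]; exact hB'.2.2.2.2.2.2.2.2.1
  have s8 := surd_step D (f - 4) (4) (d) (f - 2) (f - t - 1) hD0
    (by linarith only [ht, hf5t, hf5]) (by linarith only [ht, hf5t, hf5])
    (by linear_combination (-2)*hd)
    hU8
    (by linarith only [ht, hf5t, hf5])
    (by linear_combination hD4)
  have hU9 : D < ((f - 2*t) + (f - t - 1))^2 := by rw [hD4]; exact hB'.2.2.2.2.2.2.2.2.2.1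
  have s9 := surd_step D (f - 2) (f - t - 1) (2) (f - 2*t) (4*t) hD0
    (by linarith only [ht, hf5t, hf5]) (by linarith only [ht, hf5t, hf5])
    (by ring)
    hU9
    (by linarith only [ht, hf5t, hf5])
    (by linear_combination hD4)
  have hU10 : D < ((f - 4*t) + (4*t))^2 := by rw [hD4]; exact hB'.2.2.2.2.2.2.2.2.2.2.1
  have s10 := surd_step D (f - 2*t) (4*t) (c) (f - 4*t) (2*f - 4*t - 1) hD0
    (by linarith only [ht, hf5t, hf5]) (by linarith only [ht, hf5t, hf5])
    (by linear_combination (-2*t)*hc + (-2)*hfmt)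
    hU10
    (by linarith only [ht, hf5t, hf5])
    (by linear_combination hD4)
  have hU11 : D < ((f - 1) + (2*f - 4*t - 1))^2 := by rw [hD4]; exact hB'.2.2.2.2.2.2.2.2.2.2.2
  have s11 := surd_step D (f - 4*t) (2*f - 4*t - 1) (1) (f - 1) (1) hD0
    (by linarith only [ht, hf5t, hf5]) (by linarith only [ht, hf5t, hf5])
    (by ring)
    hU11
    (by linarith only [ht, hf5t, hf5])
    (by linear_combination hD4)
  have hx0 : cfX (Real.sqrt (D:ℝ)) 0 = (Real.sqrt (D:ℝ) + ((0 : ℤ):ℝ))/(((1 : ℤ)):ℝ) := by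
    simp [cfX]
  have hx1 : cfX (Real.sqrt (D:ℝ)) 1 = (Real.sqrt (D:ℝ) + (((f - 1) : ℤ):ℝ))/(((2*f - 4*t - 1) : ℤ):ℝ) := by
    have e : cfX (Real.sqrt (D:ℝ)) 1 = 1 / Int.fract (cfX (Real.sqrt (D:ℝ)) 0) := rfl
    rw [e, hx0, s0.2]
  have ha0 : cfA (Real.sqrt (D:ℝ)) 0 = (f - 1) := by
    simp only [cfA]; rw [hx0]; exact s0.1
  have hx2 : cfX (Real.sqrt (D:ℝ)) 2 = (Real.sqrt (D:ℝ) + (((f - 4*t) : ℤ):ℝ))/(((4*t) : ℤ):ℝ) := by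
    have e : cfX (Real.sqrt (D:ℝ)) 2 = 1 / Int.fract (cfX (Real.sqrt (D:ℝ)) 1) := rfl
    rw [e, hx1, s1.2]
  have ha1 : cfA (Real.sqrt (D:ℝ)) 1 = (1) := by
    simp only [cfA]; rw [hx1]; exact s1.1
  have hx3 : cfX (Real.sqrt (D:ℝ)) 3 = (Real.sqrt (D:ℝ) + (((f - 2*t) : ℤ):ℝ))/(((f - t - 1) : ℤ):ℝ) := by
    have e : cfX (Real.sqrt (D:ℝ)) 3 = 1 / Int.fract (cfX (Real.sqrt (D:ℝ)) 2) := rfl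
    rw [e, hx2, s2.2]
  have ha2 : cfA (Real.sqrt (D:ℝ)) 2 = (c) := by
    simp only [cfA]; rw [hx2]; exact s2.1
  have hx4 : cfX (Real.sqrt (D:ℝ)) 4 = (Real.sqrt (D:ℝ) + (((f - 2) : ℤ):ℝ))/(((4) : ℤ):ℝ) := by
    have e : cfX (Real.sqrt (D:ℝ)) 4 = 1 / Int.fract (cfX (Real.sqrt (D:ℝ)) 3) := rfl
    rw [e, hx3, s3.2]
  have ha3 : cfA (Real.sqrt (D:ℝ)) 3 = (2) := by
    simp only [cfA]; rw [hx3]; exact s3.1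
  have hx5 : cfX (Real.sqrt (D:ℝ)) 5 = (Real.sqrt (D:ℝ) + (((f - 4) : ℤ):ℝ))/(((2*f - t - 4) : ℤ):ℝ) := by
    have e : cfX (Real.sqrt (D:ℝ)) 5 = 1 / Int.fract (cfX (Real.sqrt (D:ℝ)) 4) := rfl
    rw [e, hx4, s4.2]
  have ha4 : cfA (Real.sqrt (D:ℝ)) 4 = (d) := by
    simp only [cfA]; rw [hx4]; exact s4.1
  have hx6 : cfX (Real.sqrt (D:ℝ)) 6 = (Real.sqrt (D:ℝ) + (((f - t) : ℤ):ℝ))/(((t) : ℤ):ℝ) := by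
    have e : cfX (Real.sqrt (D:ℝ)) 6 = 1 / Int.fract (cfX (Real.sqrt (D:ℝ)) 5) := rfl
    rw [e, hx5, s5.2]
  have ha5 : cfA (Real.sqrt (D:ℝ)) 5 = (1) := by
    simp only [cfA]; rw [hx5]; exact s5.1
  have hx7 : cfX (Real.sqrt (D:ℝ)) 7 = (Real.sqrt (D:ℝ) + (((f - t) : ℤ):ℝ))/(((2*f - t - 4) : ℤ):ℝ) := by
    have e : cfX (Real.sqrt (D:ℝ)) 7 = 1 / Int.fract (cfX (Real.sqrt (D:ℝ)) 6) := rfl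
    rw [e, hx6, s6.2]
  have ha6 : cfA (Real.sqrt (D:ℝ)) 6 = (2*m - 2) := by
    simp only [cfA]; rw [hx6]; exact s6.1
  have hx8 : cfX (Real.sqrt (D:ℝ)) 8 = (Real.sqrt (D:ℝ) + (((f - 4) : ℤ):ℝ))/(((4) : ℤ):ℝ) := by
    have e : cfX (Real.sqrt (D:ℝ)) 8 = 1 / Int.fract (cfX (Real.sqrt (D:ℝ)) 7) := rfl
    rw [e, hx7, s7.2]
  have ha7 : cfA (Real.sqrt (D:ℝ)) 7 = (1) := by
    simp only [cfA]; rw [hx7]; exact s7.1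
  have hx9 : cfX (Real.sqrt (D:ℝ)) 9 = (Real.sqrt (D:ℝ) + (((f - 2) : ℤ):ℝ))/(((f - t - 1) : ℤ):ℝ) := by
    have e : cfX (Real.sqrt (D:ℝ)) 9 = 1 / Int.fract (cfX (Real.sqrt (D:ℝ)) 8) := rfl
    rw [e, hx8, s8.2]
  have ha8 : cfA (Real.sqrt (D:ℝ)) 8 = (d) := by
    simp only [cfA]; rw [hx8]; exact s8.1
  have hx10 : cfX (Real.sqrt (D:ℝ)) 10 = (Real.sqrt (D:ℝ) + (((f - 2*t) : ℤ):ℝ))/(((4*t) : ℤ):ℝ) := by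
    have e : cfX (Real.sqrt (D:ℝ)) 10 = 1 / Int.fract (cfX (Real.sqrt (D:ℝ)) 9) := rfl
    rw [e, hx9, s9.2]
  have ha9 : cfA (Real.sqrt (D:ℝ)) 9 = (2) := by
    simp only [cfA]; rw [hx9]; exact s9.1
  have hx11 : cfX (Real.sqrt (D:ℝ)) 11 = (Real.sqrt (D:ℝ) + (((f - 4*t) : ℤ):ℝ))/(((2*f - 4*t - 1) : ℤ):ℝ) := by
    have e : cfX (Real.sqrt (D:ℝ)) 11 = 1 / Int.fract (cfX (Real.sqrt (D:ℝ)) 10) := rfl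
    rw [e, hx10, s10.2]
  have ha10 : cfA (Real.sqrt (D:ℝ)) 10 = (c) := by
    simp only [cfA]; rw [hx10]; exact s10.1
  have hx12 : cfX (Real.sqrt (D:ℝ)) 12 = (Real.sqrt (D:ℝ) + (((f - 1) : ℤ):ℝ))/(((1) : ℤ):ℝ) := by
    have e : cfX (Real.sqrt (D:ℝ)) 12 = 1 / Int.fract (cfX (Real.sqrt (D:ℝ)) 11) := rfl
    rw [e, hx11, s11.2]
  have ha11 : cfA (Real.sqrt (D:ℝ)) 11 = (1) := by
    simp only [cfA]; rw [hx11]; exact s11.1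
  have hx12' : cfX (Real.sqrt (D:ℝ)) 12 = Real.sqrt (D:ℝ) + ((f - 1 : ℤ):ℝ) := by
    rw [hx12]; push_cast; ring
  have hfl0 : ⌊Real.sqrt (D:ℝ)⌋ = f - 1 := by
    have h := s0.1
    simpa using h
  have ha12 : cfA (Real.sqrt (D:ℝ)) 12 = 2 * (f - 1) := by
    simp only [cfA]
    rw [hx12', Int.floor_add_intCast, hfl0]
    ring
  have hfr12 : Int.fract (cfX (Real.sqrt (D:ℝ)) 12) = Int.fract (Real.sqrt (D:ℝ)) := by
    rw [hx12']; exact Int.fract_add_intCast _ _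
  have hx13 : cfX (Real.sqrt (D:ℝ)) 13 = cfX (Real.sqrt (D:ℝ)) 1 := by
    have e13 : cfX (Real.sqrt (D:ℝ)) 13 = 1 / Int.fract (cfX (Real.sqrt (D:ℝ)) 12) := rfl
    have e1 : cfX (Real.sqrt (D:ℝ)) 1 = 1 / Int.fract (cfX (Real.sqrt (D:ℝ)) 0) := rfl
    rw [e13, e1, hfr12]
    rfl
  have per : ∀ k : ℕ, cfX (Real.sqrt (D:ℝ)) (k + 13) = cfX (Real.sqrt (D:ℝ)) (k + 1) := by
    intro k
    induction k with
    | zero => simpa using hx13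
    | succ k ih =>
      have e1 : cfX (Real.sqrt (D:ℝ)) (k + 1 + 13) = 1 / Int.fract (cfX (Real.sqrt (D:ℝ)) (k + 13)) := rfl
      have e2 : cfX (Real.sqrt (D:ℝ)) (k + 1 + 1) = 1 / Int.fract (cfX (Real.sqrt (D:ℝ)) (k + 1)) := rfl
      rw [e1, e2, ih]
  have perA : ∀ (i k : ℕ), 1 ≤ k → cfA (Real.sqrt (D:ℝ)) (12 * i + k) = cfA (Real.sqrt (D:ℝ)) k := by
    intro i
    induction i with
    | zero => intro k _; norm_num
    | succ i ih =>
      intro k hk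
      have e : 12 * (i + 1) + k = (12 * i + (k - 1)) + 13 := by omega
      have e2 : (12 * i + (k - 1)) + 1 = 12 * i + k := by omega
      simp only [cfA]
      rw [e, per, e2]
      exact ih k hk
  refine ⟨ha0, fun i => ?_⟩
  rw [perA i 1 (by norm_num), perA i 2 (by norm_num), perA i 3 (by norm_num),
    perA i 4 (by norm_num), perA i 5 (by norm_num), perA i 6 (by norm_num),
    perA i 7 (by norm_num), perA i 8 (by norm_num), perA i 9 (by norm_num),
    perA i 10 (by norm_num), perA i 11 (by norm_num), perA i 12 (by norm_num)]
  refine ⟨ha1, ?_, ha3, ?_, ha5, ?_, ha7, ?_, ha9, ?_, ha11, ha12⟩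
  · rw [ha2, hcdiv]
  · rw [ha4, hddiv]
  · rw [ha6]; ring
  · rw [ha8, hddiv]
  · rw [ha10, hcdiv]
end

section
/- Let α ≥ 0 and f, n ≥ 1 be integers, let m ≥ 5 be an odd integer, assume 4·f = 2^α·m·n, that f is odd with f ≥ 5, that 2^α·n > 4, and set D = f² − 2^α·n. Assume D is not a perfect square. Then, writing t = f·m, the pair (X, Y) = (t·(t−3)²/2 − 1, m·(t−1)·(t−3)/2) is the fundamental solution of the Pell equation X² − D·Y² = 1; that is, X² − D·Y² = 1 and every pair of positive integers (x, y) with x² − D·y² = 1 satisfies Y ≤ y. -/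
set_option maxHeartbeats 2000000 in
theorem stmt11 (α : ℕ) (f n m : ℤ) (hf : 1 ≤ f) (hn : 1 ≤ n) (hm : 5 ≤ m)
    (hmodd : Odd m) (hdiv : 4 * f = 2 ^ α * m * n) (hfodd : Odd f) (hf5 : 5 ≤ f)
    (hgt : 4 < 2 ^ α * n)
    (D : ℤ) (hD : D = f ^ 2 - 2 ^ α * n) (hns : ¬ IsSquare D)
    (t : ℤ) (ht : t = f * m) :
    (t * (t - 3) ^ 2 / 2 - 1) ^ 2 - D * (m * (t - 1) * (t - 3) / 2) ^ 2 = 1 ∧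
      ∀ x y : ℤ, 0 < x → 0 < y → x ^ 2 - D * y ^ 2 = 1 → m * (t - 1) * (t - 3) / 2 ≤ y := by
  -- extract s with f = m * s
  obtain ⟨k, hk⟩ := hmodd
  have hmodd : Odd m := ⟨k, hk⟩
  have hcop4 : IsCoprime m (4:ℤ) := ⟨m, -(k^2+k), by subst hk; ring⟩
  have hmdvd : m ∣ f := by
    refine hcop4.dvd_of_dvd_mul_left ⟨2 ^ α * n, ?_⟩
    rw [hdiv]; ring
  obtain ⟨s, hfs⟩ := hmdvd
  have hm0 : (m:ℤ) ≠ 0 := by intro h; rw [h] at hm; norm_num at hm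
  have h4s : 2 ^ α * n = 4 * s := by
    have h1 : m * (4 * s) = m * (2 ^ α * n) := by
      rw [hfs] at hdiv; linear_combination hdiv
    have := mul_left_cancel₀ hm0 h1
    linarith
  have hsodd : Odd s := by
    rcases Int.even_or_odd s with he | ho
    · exfalso
      rcases he with ⟨r, hr⟩
      have : Even f := ⟨m*r, by rw [hfs, hr]; ring⟩
      exact (Int.not_odd_iff_even.mpr this) hfodd
    · exact ho
  have hs1 : 1 < s := by
    rw [h4s] at hgt; linarith
  have hs3 : 3 ≤ s := by
    rcases hsodd with ⟨r, hr⟩; omega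
  have hDeq : D = m^2 * s^2 - 4 * s := by
    rw [hD, h4s, hfs]; ring
  have hDpos : 0 < D := by nlinarith
  have hDodd : Odd D := by
    have h1 : Odd (m^2*s^2) := (hmodd.pow).mul (hsodd.pow)
    rw [hDeq]
    exact h1.sub_even ⟨2*s, by ring⟩
  have htms : t = m^2 * s := by rw [ht, hfs]; ring
  have htodd : Odd t := by rw [ht]; exact hfodd.mul hmodd
  have hAodd : Odd (t - 2) := htodd.sub_even ⟨1, by ring⟩
  have ht75 : 75 ≤ t := by nlinarith
  have hA : (t - 2)^2 - D * m^2 = 4 := by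
    rw [htms, hDeq]; ring
  -- parity of norm-4 solutions
  have par : ∀ a b : ℤ, a^2 - D*b^2 = 4 → Even (a - b) := by
    intro a b hab
    have h1 : Even (a^2 - b^2) := by
      have h2 : a^2 - b^2 = (D-1)*b^2 + 4 := by linarith
      rw [h2]
      exact ((hDodd.sub_odd odd_one).mul_right _).add ⟨2, by ring⟩
    have h3 : a^2 - b^2 = (a - b) * (a + b) := by ring
    rw [h3] at h1
    rcases Int.even_mul.mp h1 with h | h
    · exact h
    · have h4 : a - b = (a + b) - 2*b := by ring
      rw [h4]; exact h.sub ⟨b, two_mul b⟩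
  -- key lemma: every positive norm-4 solution has b >= m
  have L1 : ∀ a b : ℤ, 0 ≤ a → 0 < b → a^2 - D*b^2 = 4 → m ≤ b := by
    intro a b ha hb hab
    have hb1 : 1 ≤ b := hb
    have hc15 : 15 ≤ m * s * b := by nlinarith
    have hac : a < m * s * b := by nlinarith [hab, hDeq]
    have hevca : Even (m * s * b - a) := by
      have h1 : Even (m*s*b - b) := by
        have he : m*s*b - b = b * (m*s - 1) := by ring
        rw [he]
        exact ((hmodd.mul hsodd).sub_odd odd_one).mul_left b
      have h2 : Even (b - a) := by
        have h3 := par a b hab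
        have h4 : b - a = -(a - b) := by ring
        rw [h4]; exact h3.neg
      have h5 : m*s*b - a = (m*s*b - b) + (b - a) := by ring
      rw [h5]; exact h1.add h2
    obtain ⟨d, hd⟩ := hevca
    have hd1 : 1 ≤ d := by omega
    have hdub : d ≤ m*s*b - 1 := by omega
    have ha2 : a = m*s*b - (d + d) := by omega
    subst ha2
    rw [hDeq] at hab
    have h4 : 4*(s*b*b - 1) = 4*((m*s*b)*d - d*d) := by linear_combination hab
    have hmono : (0:ℤ) ≤ (d - 1)*((m*s*b - 1) - d) :=
      mul_nonneg (by omega) (by omega)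
    have key : m*s*b ≤ s*b*b := by nlinarith [h4, hmono]
    have hsb : 0 < s * b := by positivity
    have key2 : s*b*m ≤ s*b*b := by nlinarith [key]
    exact le_of_mul_le_mul_left key2 hsb
  have hmpos : (0:ℤ) < m := by linarith
  have htA : (0:ℤ) < t - 2 := by linarith
  have hDm : D*m^2 = t^2 - 4*t := by linear_combination (-1 : ℤ) * hA
  -- square-root comparison helper
  have sqle : ∀ u v : ℤ, 0 < u → 0 < v → u^2 ≤ v^2 → u ≤ v := by
    intro u v hu hv h
    exact le_of_pow_le_pow_left₀ two_ne_zero (le_of_lt hv) h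
  have sqlt : ∀ u v : ℤ, 0 ≤ u → 0 ≤ v → u^2 < v^2 → u < v := by
    intro u v hu hv h
    by_contra hcon
    push_neg at hcon
    have h2 := pow_le_pow_left₀ hv hcon 2
    linarith
  -- even witnesses for t-3 and t-1
  obtain ⟨c, hc⟩ : Even (t - 3) := htodd.sub_odd ⟨1, by norm_num⟩
  obtain ⟨e, he⟩ : Even (t - 1) := htodd.sub_odd odd_one
  have hX2 : t*(t-3)^2 = 2*(t*(t-3)*c) := by linear_combination (t*(t-3))*hc
  have hY2 : m*(t-1)*(t-3) = 2*(m*e*(t-3)) := by linear_combination (m*(t-3))*he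
  rw [hX2, hY2, Int.mul_ediv_cancel_left (t*(t-3)*c) (by norm_num : (2:ℤ) ≠ 0),
    Int.mul_ediv_cancel_left (m*e*(t-3)) (by norm_num : (2:ℤ) ≠ 0)]
  constructor
  · -- the Pell identity
    have htc : t = 2*c + 3 := by omega
    have hte : e = c + 1 := by omega
    subst hte
    subst htc
    linear_combination (-4*c^2*(c+1)^2) * hDm
  · -- minimality
    intro x y hx hy hxy
    clear hdiv hgt hD hns hDeq hfs h4s hk hcop4 hX2 hY2 hDm htms hc hf hf5 hn hfodd hsodd hs1 hs3 ht hm0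
    have h0 : (2*x)^2 - D*(2*y)^2 = 4 := by linear_combination 4*hxy
    have hb0 : m ≤ 2*y := L1 (2*x) (2*y) (by linarith) (by linarith) h0
    have hb0' : m < 2*y := by
      rcases eq_or_lt_of_le hb0 with hEq | h
      · exfalso; obtain ⟨k2, hk2⟩ := hmodd; omega
      · exact h
    -- first descent step
    have hn41 : (x*(t-2) - D*y*m)^2 - D*(y*(t-2) - x*m)^2 = 4 := by
      linear_combination ((t-2)^2 - D*m^2)*hxy + hA
    have hsq1 : (y*(t-2))^2 - (x*m)^2 = 4*y^2 - m^2 := by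
      linear_combination y^2*hA - m^2*hxy
    have h4ym : m^2 < 4*y^2 := by
      have h := mul_lt_mul'' hb0' hb0' (by linarith : (0:ℤ) ≤ m) (by linarith : (0:ℤ) ≤ m)
      linarith [h]
    have hb1pos : 0 < (y*(t-2) - x*m) := by
      have h1 : (x*m)^2 < (y*(t-2))^2 := by linarith [hsq1, h4ym]
      have h2 := sqlt (x*m) (y*(t-2)) (by positivity) (by positivity) h1
      linarith
    have hsq2 : (x*(t-2))^2 - (D*y*m)^2 = 4*D*y^2 + D*m^2 + 4 := by
      linear_combination (D*m^2+4)*hxy + x^2*hA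
    have ha1pos : 0 < (x*(t-2) - D*y*m) := by
      have e1 : 0 < D*y^2 := mul_pos hDpos (pow_pos hy 2)
      have e2 : 0 < D*m^2 := mul_pos hDpos (pow_pos hmpos 2)
      have h1 : (D*y*m)^2 < (x*(t-2))^2 := by linarith [hsq2]
      have h2 := sqlt (D*y*m) (x*(t-2))
        (by positivity) (by positivity) h1
      linarith
    have hb1m : m ≤ (y*(t-2) - x*m) := L1 (x*(t-2) - D*y*m) (y*(t-2) - x*m) (le_of_lt ha1pos) hb1pos hn41
    have hrec0 : (y*(t-2) - x*m)*(t-2) + (x*(t-2) - D*y*m)*m = 4*y := by linear_combination y*hA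
    have hb1m' : m < (y*(t-2) - x*m) := by
      rcases eq_or_lt_of_le hb1m with hEq | h
      · exfalso
        have hA2 : (x*(t-2) - D*y*m)^2 = (t-2)^2 := by
          linear_combination hn41 - hA - D*(m + (y*(t-2) - x*m))*hEq
        have h00 : ((x*(t-2) - D*y*m) - (t-2))*((x*(t-2) - D*y*m) + (t-2)) = 0 := by linear_combination hA2
        rcases mul_eq_zero.mp h00 with hcase | hcase
        · have haA : (x*(t-2) - D*y*m) = t - 2 := by linarith
          have hyy : m*(t-2) + m*(t-2) = 4*y := by
            linear_combination hrec0 + (t-2)*hEq - m*haA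
          obtain ⟨j, hj⟩ : Odd (m*(t-2)) := hmodd.mul hAodd
          rw [hj] at hyy
          omega
        · linarith
      · exact h
    -- second descent step
    have hev1 : Even ((x*(t-2) - D*y*m) - (y*(t-2) - x*m)) := par (x*(t-2) - D*y*m) (y*(t-2) - x*m) hn41
    obtain ⟨b2, hb2⟩ : ∃ b2, (y*(t-2) - x*m)*(t-2) - (x*(t-2) - D*y*m)*m = 2*b2 := by
      have hpar : Even ((y*(t-2) - x*m)*(t-2) - (x*(t-2) - D*y*m)*m) := by
        have hh : (y*(t-2) - x*m)*(t-2) - (x*(t-2) - D*y*m)*m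
            = (t-2)*(-((x*(t-2) - D*y*m) - (y*(t-2) - x*m))) + (x*(t-2) - D*y*m)*((t-2) - m) := by ring
        rw [hh]
        exact (hev1.neg.mul_left _).add ((hAodd.sub_odd hmodd).mul_left _)
      obtain ⟨r, hr⟩ := hpar
      exact ⟨r, by linarith⟩
    obtain ⟨a2, ha2⟩ : ∃ a2, (x*(t-2) - D*y*m)*(t-2) - D*(y*(t-2) - x*m)*m = 2*a2 := by
      have hpar : Even ((x*(t-2) - D*y*m)*(t-2) - D*(y*(t-2) - x*m)*m) := by
        have hh : (x*(t-2) - D*y*m)*(t-2) - D*(y*(t-2) - x*m)*m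
            = (t-2)*((x*(t-2) - D*y*m) - (y*(t-2) - x*m)) + (y*(t-2) - x*m)*((t-2) - D*m) := by ring
        rw [hh]
        exact (hev1.mul_left _).add ((hAodd.sub_odd (hDodd.mul hmodd)).mul_left _)
      obtain ⟨r, hr⟩ := hpar
      exact ⟨r, by linarith⟩
    have hn42 : a2^2 - D*b2^2 = 4 := by
      have h44 : 4*(a2^2 - D*b2^2) = 4*4 := by
        linear_combination ((t-2)^2 - D*m^2)*hn41 + 4*hA
          - ((x*(t-2) - D*y*m)*(t-2) - D*(y*(t-2) - x*m)*m + 2*a2)*ha2 + D*((y*(t-2) - x*m)*(t-2) - (x*(t-2) - D*y*m)*m + 2*b2)*hb2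
      exact mul_left_cancel₀ (by norm_num : (4:ℤ) ≠ 0) h44
    have hsq3 : ((y*(t-2) - x*m)*(t-2))^2 - ((x*(t-2) - D*y*m)*m)^2 = 4*((y*(t-2) - x*m)^2 - m^2) := by
      linear_combination (y*(t-2) - x*m)^2*hA - m^2*hn41
    have hb2pos : 0 < b2 := by
      have h2b2 : 0 < 2*b2 := by
        rw [← hb2]
        have hBm : m^2 < (y*(t-2) - x*m)^2 := by
          have h := mul_lt_mul'' hb1m' hb1m' (by linarith : (0:ℤ) ≤ m)
            (by linarith : (0:ℤ) ≤ m)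
          linarith [h]
        have h1 : ((x*(t-2) - D*y*m)*m)^2 < ((y*(t-2) - x*m)*(t-2))^2 := by linarith [hsq3, hBm]
        have h2 := sqlt ((x*(t-2) - D*y*m)*m) ((y*(t-2) - x*m)*(t-2))
          (by positivity) (by positivity) h1
        linarith
      linarith
    have hsq4 : ((x*(t-2) - D*y*m)*(t-2))^2 - (D*(y*(t-2) - x*m)*m)^2 = 4*D*(y*(t-2) - x*m)^2 + 4*D*m^2 + 16 := by
      linear_combination (D*m^2+4)*hn41 + (x*(t-2) - D*y*m)^2*hA
    have ha2pos : 0 < a2 := by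
      have h2a2 : 0 < 2*a2 := by
        rw [← ha2]
        have e1 : 0 < D*(y*(t-2) - x*m)^2 := mul_pos hDpos (pow_pos hb1pos 2)
        have e2 : 0 < D*m^2 := mul_pos hDpos (pow_pos hmpos 2)
        have h1 : (D*(y*(t-2) - x*m)*m)^2 < ((x*(t-2) - D*y*m)*(t-2))^2 := by linarith [hsq4]
        have h2 := sqlt (D*(y*(t-2) - x*m)*m) ((x*(t-2) - D*y*m)*(t-2))
          (by positivity) (by positivity) h1
        linarith
      linarith
    have hb2m : m ≤ b2 := L1 a2 b2 (le_of_lt ha2pos) hb2pos hn42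
    have ha2A : t - 2 ≤ a2 := by
      refine sqle (t-2) a2 htA ha2pos ?_
      have hm2 : m^2 ≤ b2^2 := pow_le_pow_left₀ (by linarith) hb2m 2
      have h1 : D*m^2 ≤ D*b2^2 := mul_le_mul_of_nonneg_left hm2 (le_of_lt hDpos)
      linarith [hn42, hA, h1]
    have hrec1 : 2*b2*(t-2) + 2*a2*m = 4*(y*(t-2) - x*m) := by
      rw [show 2*b2 = (y*(t-2) - x*m)*(t-2) - (x*(t-2) - D*y*m)*m from hb2.symm,
        show 2*a2 = (x*(t-2) - D*y*m)*(t-2) - D*(y*(t-2) - x*m)*m from ha2.symm]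
      linear_combination (y*(t-2) - x*m)*hA
    have hb1big : m*(t-2) ≤ (y*(t-2) - x*m) := by
      have p1 : m*(t-2) ≤ b2*(t-2) := mul_le_mul_of_nonneg_right hb2m (by linarith)
      have p2 : (t-2)*m ≤ a2*m := mul_le_mul_of_nonneg_right ha2A (by linarith)
      linarith [hrec1, p1, p2]
    have q1 : (m*(t-2))^2 ≤ (y*(t-2) - x*m)^2 :=
      pow_le_pow_left₀ (by positivity) hb1big 2
    have q2 : ((t-2)^2 - 2)^2 ≤ (x*(t-2) - D*y*m)^2 := by
      have key : D*(m*(t-2))^2 = ((t-2)^2-2)^2 - 4 := by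
        linear_combination (t-2)^2 * (by linarith [hA] : D*m^2 = (t-2)^2 - 4)
      have h1 : D*(m*(t-2))^2 ≤ D*(y*(t-2) - x*m)^2 := mul_le_mul_of_nonneg_left q1 (le_of_lt hDpos)
      linarith [hn41, key, h1]
    have ha1big : (t-2)^2 - 2 ≤ (x*(t-2) - D*y*m) := by
      refine sqle ((t-2)^2 - 2) (x*(t-2) - D*y*m) ?_ ha1pos q2
      have h73 : (73:ℤ) ≤ t - 2 := by linarith
      have h74 := mul_le_mul h73 h73 (by norm_num) (by linarith)
      linarith [h74]
    have r1 : m*(t-2)*(t-2) ≤ (y*(t-2) - x*m)*(t-2) :=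
      mul_le_mul_of_nonneg_right hb1big (by linarith)
    have r2 : ((t-2)^2 - 2)*m ≤ (x*(t-2) - D*y*m)*m :=
      mul_le_mul_of_nonneg_right ha1big (by linarith)
    have hfin : m*(t-2)*(t-2) + ((t-2)^2 - 2)*m = 4*(m*e*(t-3)) := by
      linear_combination (2*m*(t-3))*he
    linarith [hrec0, r1, r2, hfin]
end

section
/- Let d be an integer. (a) If d ≥ 1 and D = d² + 2, then (d² + 1, d) is the fundamental solution of the Pell equation X² − D·Y² = 1. (b) If d ≥ 2 and D = d² − 2, then (d² − 1, d) is the fundamental solution of the Pell equation X² − D·Y² = 1. In each case X² − D·Y² = 1 holds and every pair of positive integers (x, y) with x² − D·y² = 1 satisfies d ≤ y. -/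
theorem stmt14 (d : ℤ) :
    (1 ≤ d →
      (d ^ 2 + 1) ^ 2 - (d ^ 2 + 2) * d ^ 2 = 1 ∧
        ∀ x y : ℤ, 0 < x → 0 < y → x ^ 2 - (d ^ 2 + 2) * y ^ 2 = 1 → d ≤ y) ∧
    (2 ≤ d →
      (d ^ 2 - 1) ^ 2 - (d ^ 2 - 2) * d ^ 2 = 1 ∧
        ∀ x y : ℤ, 0 < x → 0 < y → x ^ 2 - (d ^ 2 - 2) * y ^ 2 = 1 → d ≤ y) := by
  constructor
  · intro hd
    refine ⟨by ring, ?_⟩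
    intro x y hx hy h
    by_contra hle
    push_neg at hle
    have hyd : y ≤ d - 1 := by omega
    have h1 : (d * y) ^ 2 < x ^ 2 := by nlinarith
    have h2 : x ^ 2 < (d * y + 1) ^ 2 := by nlinarith
    have hx1 : d * y < x := lt_of_pow_lt_pow_left₀ 2 hx.le h1
    have hx2 : x < d * y + 1 := by
      have : (0:ℤ) ≤ d * y + 1 := by positivity
      exact lt_of_pow_lt_pow_left₀ 2 this h2
    omega
  · intro hd
    refine ⟨by ring, ?_⟩
    intro x y hx hy h
    by_contra hle
    push_neg at hle
    have hyd : y ≤ d - 1 := by omega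
    have h1 : (d * y - 1) ^ 2 < x ^ 2 := by nlinarith
    have h2 : x ^ 2 < (d * y) ^ 2 := by nlinarith
    have hx1 : d * y - 1 < x := lt_of_pow_lt_pow_left₀ 2 hx.le h1
    have hx2 : x < d * y := by
      have : (0:ℤ) ≤ d * y := by positivity
      exact lt_of_pow_lt_pow_left₀ 2 this h2
    omega
end

section
/- Let n, d ≥ 1 be integers. (a) If D = n·(n·d² + 1) is not a perfect square, then (2n·d² + 1, 2d) is the fundamental solution of the Pell equation X² − D·Y² = 1. (b) If n ≥ 2 and D = n·(n·d² − 1) is not a perfect square, then (2n·d² − 1, 2d) is the fundamental solution of the Pell equation X² − D·Y² = 1. In each case X² − D·Y² = 1 holds and every pair of positive integers (x, y) with x² − D·y² = 1 satisfies 2d ≤ y. -/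
theorem stmt15 (n d : ℤ) (hn : 1 ≤ n) (hd : 1 ≤ d) :
    (¬ IsSquare (n * (n * d ^ 2 + 1)) →
      (2 * n * d ^ 2 + 1) ^ 2 - n * (n * d ^ 2 + 1) * (2 * d) ^ 2 = 1 ∧
        ∀ x y : ℤ, 0 < x → 0 < y →
          x ^ 2 - n * (n * d ^ 2 + 1) * y ^ 2 = 1 → 2 * d ≤ y) ∧
    (2 ≤ n → ¬ IsSquare (n * (n * d ^ 2 - 1)) →
      (2 * n * d ^ 2 - 1) ^ 2 - n * (n * d ^ 2 - 1) * (2 * d) ^ 2 = 1 ∧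
        ∀ x y : ℤ, 0 < x → 0 < y →
          x ^ 2 - n * (n * d ^ 2 - 1) * y ^ 2 = 1 → 2 * d ≤ y) := by
  constructor
  · intro _
    refine ⟨by ring, ?_⟩
    intro x y hx hy hxy
    have key : (x - n * d * y) * (x + n * d * y) = n * y ^ 2 + 1 := by
      linear_combination hxy
    have hpos : 0 < n * d * y := by positivity
    have h1 : n * d * y < x := by nlinarith [sq_nonneg (x - n * d * y)]
    have h2 : 1 ≤ x - n * d * y := by
      have := Int.lt_iff_add_one_le.mp h1; linarith
    have h3 : 2 * (n * d * y) + 1 ≤ x + n * d * y := by linarith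
    have h4 : (2 * (n * d * y) + 1) * 1 ≤ (x + n * d * y) * (x - n * d * y) :=
      mul_le_mul h3 h2 (by norm_num) (by linarith)
    have h5 : 2 * (n * d * y) + 1 ≤ n * y ^ 2 + 1 := by nlinarith [key]
    nlinarith [mul_pos (show (0:ℤ) < n by linarith) hy]
  · intro hn2 _
    refine ⟨by ring, ?_⟩
    intro x y hx hy hxy
    have key : (n * d * y - x) * (n * d * y + x) = n * y ^ 2 - 1 := by
      linear_combination -hxy
    have hny : 2 ≤ n * y ^ 2 := by nlinarith
    have hpos : 0 < n * d * y := by positivity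
    have h1 : x < n * d * y := by nlinarith [key, hny, hpos, hx]
    have h2 : 1 ≤ n * d * y - x := by
      have := Int.lt_iff_add_one_le.mp h1; linarith
    have h3 : 0 ≤ (n * d * y - x - 1) * (n * d * y + x - 1) := by
      apply mul_nonneg <;> linarith
    have h5 : 2 * (n * d * y) - 1 ≤ n * y ^ 2 - 1 := by nlinarith [key]
    nlinarith [mul_pos (show (0:ℤ) < n by linarith) hy]
end

section
/- Let m, d ≥ 1 be integers. (a) If D = d·(m²·d + 2), then (m²·d + 1, m) is the fundamental solution of the Pell equation X² − D·Y² = 1. (b) If m ≥ 3 and D = d·(m²·d − 2), then (m²·d − 1, m) is the fundamental solution of the Pell equation X² − D·Y² = 1. In each case X² − D·Y² = 1 holds and every pair of positive integers (x, y) with x² − D·y² = 1 satisfies m ≤ y. -/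
lemma no_sq_between (a x : ℤ) (ha : 0 ≤ a) (hx : 0 < x)
    (h1 : a ^ 2 < x ^ 2) (h2 : x ^ 2 < (a + 1) ^ 2) : False := by
  have hax : a < x := by nlinarith
  have hax' : a + 1 ≤ x := hax
  nlinarith

theorem stmt16 (m d : ℤ) (hm : 1 ≤ m) (hd : 1 ≤ d) :
    ((m ^ 2 * d + 1) ^ 2 - d * (m ^ 2 * d + 2) * m ^ 2 = 1 ∧
        ∀ x y : ℤ, 0 < x → 0 < y →
          x ^ 2 - d * (m ^ 2 * d + 2) * y ^ 2 = 1 → m ≤ y) ∧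
    (3 ≤ m →
      (m ^ 2 * d - 1) ^ 2 - d * (m ^ 2 * d - 2) * m ^ 2 = 1 ∧
        ∀ x y : ℤ, 0 < x → 0 < y →
          x ^ 2 - d * (m ^ 2 * d - 2) * y ^ 2 = 1 → m ≤ y) := by
  refine ⟨⟨by ring, ?_⟩, fun hm3 => ⟨by ring, ?_⟩⟩
  · intro x y hx hy h
    by_contra hlt
    push_neg at hlt
    have hy' : y ≤ m - 1 := by omega
    have key : 0 < d * y * (m - y) := by
      apply mul_pos (mul_pos (by omega) hy); omega
    exact no_sq_between (m * d * y) x (by positivity) hx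
      (by nlinarith) (by nlinarith)
  · intro x y hx hy h
    by_contra hlt
    push_neg at hlt
    have hy' : y ≤ m - 1 := by omega
    have key : 0 < d * y * (m - y) := by
      apply mul_pos (mul_pos (by omega) hy); omega
    have hmdy : 1 ≤ m * d * y := by
      have := mul_pos (mul_pos (show (0:ℤ) < m by omega) (show (0:ℤ) < d by omega)) hy
      omega
    have ha : 0 ≤ m * d * y - 1 := by omega
    exact no_sq_between (m * d * y - 1) x ha hx
      (by nlinarith) (by nlinarith)
end

section
/- Let d ≥ 2 be an even integer and D = d·(d + 4). Then (X, Y) = ((d+2)²/2 − 1, (d+2)/2) is the fundamental solution of the Pell equation X² − D·Y² = 1; that is, X² − D·Y² = 1 and every pair of positive integers (x, y) with x² − D·y² = 1 satisfies (d+2)/2 ≤ y. -/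
theorem stmt17 (d : ℤ) (hd : 2 ≤ d) (hdeven : Even d) (D : ℤ) (hD : D = d * (d + 4)) :
    ((d + 2) ^ 2 / 2 - 1) ^ 2 - D * ((d + 2) / 2) ^ 2 = 1 ∧
      ∀ x y : ℤ, 0 < x → 0 < y → x ^ 2 - D * y ^ 2 = 1 → (d + 2) / 2 ≤ y := by
  obtain ⟨k, hk⟩ := hdeven
  subst hk hD
  have hk1 : 1 ≤ k := by omega
  have h1 : (k + k + 2) / 2 = k + 1 := by omega
  have h2 : (k + k + 2) ^ 2 / 2 = 2 * (k + 1) ^ 2 := by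
    have : (k + k + 2) ^ 2 = 2 * (2 * (k + 1) ^ 2) := by ring
    rw [this, Int.mul_ediv_cancel_left _ two_ne_zero]
  rw [h1, h2]
  constructor
  · ring
  · intro x y hx hy hxy
    by_contra h
    push_neg at h
    have hyk : y ≤ k := by omega
    set M : ℤ := (2 * k + 2) * y with hM
    have hMsq : M ^ 2 = (4 * k ^ 2 + 8 * k + 4) * y ^ 2 := by rw [hM]; ring
    have hsq1 : x ^ 2 < M ^ 2 := by nlinarith [mul_pos hy hy]
    have hsq2 : (M - 1) ^ 2 < x ^ 2 := by nlinarith [mul_pos hy (show (0:ℤ) < k + 1 - y by omega)]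
    have hM0 : 1 ≤ M := by nlinarith
    have h3 : x < M := by nlinarith
    have h4 : M - 1 < x := by nlinarith
    omega
end

section
/- Let d be an odd positive integer. (a) If D = 4d·(d + 2), then (2d·(d+2) + 1, d + 1) is the fundamental solution of the Pell equation X² − D·Y² = 1. (b) If d ≥ 3 and D = 4d·(d − 2), then (2d·(d−2) + 1, d − 1) is the fundamental solution of the Pell equation X² − D·Y² = 1. In each case X² − D·Y² = 1 holds and every pair of positive integers (x, y) with x² − D·y² = 1 satisfies Y ≤ y. -/
theorem stmt18 (d : ℤ) (hd : 0 < d) (hdodd : Odd d) :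
    ((2 * d * (d + 2) + 1) ^ 2 - 4 * d * (d + 2) * (d + 1) ^ 2 = 1 ∧
        ∀ x y : ℤ, 0 < x → 0 < y →
          x ^ 2 - 4 * d * (d + 2) * y ^ 2 = 1 → d + 1 ≤ y) ∧
    (3 ≤ d →
      (2 * d * (d - 2) + 1) ^ 2 - 4 * d * (d - 2) * (d - 1) ^ 2 = 1 ∧
        ∀ x y : ℤ, 0 < x → 0 < y →
          x ^ 2 - 4 * d * (d - 2) * y ^ 2 = 1 → d - 1 ≤ y) := by
  constructor
  · refine ⟨by ring, ?_⟩
    intro x y hx hy hxy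
    by_contra h
    push_neg at h
    have hy' : y ≤ d := by omega
    have h1 : (2 * (d + 1) * y - 1) ^ 2 < x ^ 2 := by nlinarith
    have h2 : x ^ 2 < (2 * (d + 1) * y) ^ 2 := by nlinarith
    have e1 : 2 * (d + 1) * y - 1 < x := by nlinarith
    have e2 : x < 2 * (d + 1) * y := by nlinarith
    omega
  · intro hd3
    refine ⟨by ring, ?_⟩
    intro x y hx hy hxy
    by_contra h
    push_neg at h
    have hy' : y ≤ d - 2 := by omega
    have h1 : (2 * (d - 1) * y - 1) ^ 2 < x ^ 2 := by nlinarith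
    have h2 : x ^ 2 < (2 * (d - 1) * y) ^ 2 := by nlinarith
    have e1 : 2 * (d - 1) * y - 1 < x := by nlinarith
    have e2 : x < 2 * (d - 1) * y := by nlinarith
    omega
end

section
/- Let d be an odd positive integer and D = d² + 4. Then (X, Y) = (d²·(d²+3)²/2 + 1, d·(d²+1)·(d²+3)/2) is the fundamental solution of the Pell equation X² − D·Y² = 1; that is, X² − D·Y² = 1 and every pair of positive integers (x, y) with x² − D·y² = 1 satisfies d·(d²+1)·(d²+3)/2 ≤ y. -/
set_option maxHeartbeats 1000000 in
/-- Descent lemma: every positive solution of `u² - (d²+4)v² = ±4` with `0 ≤ v`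
is one of six small pairs or has `v ≥ d⁵+4d³+3d`. -/
theorem pell_key (d : ℤ) (hd : 0 < d) (hdodd : Odd d) :
    ∀ n : ℕ, ∀ u v : ℤ, 0 < u → 0 ≤ v → v ≤ (n : ℤ) →
      (u ^ 2 - (d ^ 2 + 4) * v ^ 2 = 4 ∨ u ^ 2 - (d ^ 2 + 4) * v ^ 2 = -4) →
      (u = 2 ∧ v = 0) ∨ (u = d ∧ v = 1) ∨ (u = d ^ 2 + 2 ∧ v = d) ∨
        (u = d ^ 3 + 3 * d ∧ v = d ^ 2 + 1) ∨
        (u = d ^ 4 + 4 * d ^ 2 + 2 ∧ v = d ^ 3 + 2 * d) ∨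
        (u = d ^ 5 + 5 * d ^ 3 + 5 * d ∧ v = d ^ 4 + 3 * d ^ 2 + 1) ∨
        d ^ 5 + 4 * d ^ 3 + 3 * d ≤ v := by
  intro n
  induction n using Nat.strong_induction_on with
  | _ n IH =>
    intro u v hu hv hvn heq
    rcases (by omega : v = 0 ∨ v = 1 ∨ 2 ≤ v) with h0 | h1 | h2
    · -- v = 0
      subst h0
      rcases heq with h | h
      · left
        constructor
        · nlinarith [sq_nonneg (u - 2)]
        · rfl
      · exfalso; nlinarith [sq_nonneg u]
    · -- v = 1
      subst h1
      rcases heq with h | h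
      · -- u² = d² + 8
        have hud : d + 1 ≤ u := by nlinarith
        have hd3 : d ≤ 3 := by nlinarith
        obtain ⟨k, hk⟩ := hdodd
        interval_cases d
        · -- d = 1 : u² = 9
          right; right; left
          refine ⟨?_, rfl⟩
          nlinarith [sq_nonneg (u - 3)]
        · omega
        · -- d = 3 : u² = 17, impossible
          exfalso
          have h4 : u ≤ 4 := by nlinarith
          have h5 : u = 4 := by omega
          subst h5
          norm_num at h
      · -- u² = d²
        right; left
        refine ⟨?_, rfl⟩
        nlinarith [sq_nonneg (u - d)]
    · -- v ≥ 2 : descent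
      obtain ⟨k, hk⟩ := hdodd
      -- parity: u ≡ v (mod 2)
      have hpar : Even (u - v) := by
        have h2dvd : Even (u ^ 2 - v ^ 2) := by
          rcases heq with h | h
          · exact ⟨(2 * k ^ 2 + 2 * k + 2) * v ^ 2 + 2,
              by linear_combination h + v ^ 2 * (d + 2 * k + 1) * hk⟩
          · exact ⟨(2 * k ^ 2 + 2 * k + 2) * v ^ 2 - 2,
              by linear_combination h + v ^ 2 * (d + 2 * k + 1) * hk⟩
        rw [Int.even_sub] at h2dvd ⊢
        simpa [Int.even_pow] using h2dvd
      obtain ⟨w, hw⟩ := hpar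
      have hv' : u - d * v = 2 * (w - k * v) := by linear_combination hw - v * hk
      set v' : ℤ := w - k * v with hv'def
      have hu' : (d ^ 2 + 4) * v - d * u = 2 * (2 * v - d * v') := by
        linear_combination (-d) * hv'
      set u' : ℤ := 2 * v - d * v' with hu'def
      clear_value v' u'
      clear hv'def hu'def hw
      -- new equation with opposite sign
      have heq4 : 4 * (u' ^ 2 - (d ^ 2 + 4) * v' ^ 2) = -4 * (u ^ 2 - (d ^ 2 + 4) * v ^ 2) := by
        linear_combination (-((d ^ 2 + 4) * v - d * u + 2 * u')) * hu' +
          (d ^ 2 + 4) * (u - d * v + 2 * v') * hv'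
      have heq' : u' ^ 2 - (d ^ 2 + 4) * v' ^ 2 = 4 ∨
          u' ^ 2 - (d ^ 2 + 4) * v' ^ 2 = -4 := by
        rcases heq with h | h
        · right; linarith
        · left; linarith
      -- positivity and decrease
      have hv'0 : 0 ≤ v' := by
        rcases heq with h | h <;> nlinarith [hv', sq_nonneg (u - d * v)]
      have hu'0 : 0 < u' := by
        rcases heq with h | h <;> nlinarith [hu', sq_nonneg ((d ^ 2 + 4) * v - d * u)]
      have hv'lt : v' < v := by
        rcases heq with h | h <;> nlinarith [hv', sq_nonneg (u - d * v)]
      -- recover u, v from u', v'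
      have h4u : 4 * u = 2 * d * u' + 2 * (d ^ 2 + 4) * v' := by
        linear_combination d * hu' + (d ^ 2 + 4) * hv'
      have h4v : 4 * v = 2 * u' + 2 * d * v' := by
        linear_combination hu' + d * hv'
      -- apply induction hypothesis
      have hn : v'.toNat < n := by omega
      have := IH v'.toNat hn u' v' hu'0 hv'0 (by omega) heq'
      rcases this with ⟨e1, e2⟩ | ⟨e1, e2⟩ | ⟨e1, e2⟩ | ⟨e1, e2⟩ | ⟨e1, e2⟩ | ⟨e1, e2⟩ | hbig
      · right; left
        rw [e1, e2] at h4u h4v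
        refine ⟨by linarith, by linarith⟩
      · right; right; left
        rw [e1, e2] at h4u h4v
        constructor
        · have h : 4 * u = 4 * (d ^ 2 + 2) := by linear_combination h4u
          linarith
        · have h : 4 * v = 4 * d := by linear_combination h4v
          linarith
      · right; right; right; left
        rw [e1, e2] at h4u h4v
        constructor
        · have h : 4 * u = 4 * (d ^ 3 + 3 * d) := by linear_combination h4u
          linarith
        · have h : 4 * v = 4 * (d ^ 2 + 1) := by linear_combination h4v
          linarith
      · right; right; right; right; left
        rw [e1, e2] at h4u h4v
        constructor
        · have h : 4 * u = 4 * (d ^ 4 + 4 * d ^ 2 + 2) := by linear_combination h4u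
          linarith
        · have h : 4 * v = 4 * (d ^ 3 + 2 * d) := by linear_combination h4v
          linarith
      · right; right; right; right; right; left
        rw [e1, e2] at h4u h4v
        constructor
        · have h : 4 * u = 4 * (d ^ 5 + 5 * d ^ 3 + 5 * d) := by linear_combination h4u
          linarith
        · have h : 4 * v = 4 * (d ^ 4 + 3 * d ^ 2 + 1) := by linear_combination h4v
          linarith
      · -- next pair gives exactly v = d⁵+4d³+3d
        right; right; right; right; right; right
        rw [e1, e2] at h4v
        have h : 4 * v = 4 * (d ^ 5 + 4 * d ^ 3 + 3 * d) := by linear_combination h4v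
        linarith
      · -- v' ≥ v₆ : then v ≥ v' ≥ v₆
        right; right; right; right; right; right
        clear IH heq heq4 h4u hv' hu' hn hvn hk
        have hv1 : 1 ≤ v' := by nlinarith [pow_pos hd 5, pow_pos hd 3, hbig]
        have hsq : v' ^ 2 ≤ u' ^ 2 := by
          rcases heq' with h | h <;> nlinarith [sq_nonneg d, sq_nonneg v', hv1,
            mul_le_mul_of_nonneg_left hv1 (by positivity : (0:ℤ) ≤ v')]
        have hpos : 0 < u' + v' := by linarith
        have huv : v' ≤ u' := by nlinarith [hsq, hpos]
        have hdv : 0 ≤ d * v' - v' := by nlinarith [mul_nonneg (by linarith : (0:ℤ) ≤ d - 1) hv'0]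
        linarith [h4v, huv, hdv]

theorem hdodd_aux (d : ℤ) (h : Odd d) : Odd (d ^ 3) := h.pow

theorem stmt19 (d : ℤ) (hd : 0 < d) (hdodd : Odd d) (D : ℤ) (hD : D = d ^ 2 + 4) :
    (d ^ 2 * (d ^ 2 + 3) ^ 2 / 2 + 1) ^ 2 -
        D * (d * (d ^ 2 + 1) * (d ^ 2 + 3) / 2) ^ 2 = 1 ∧
      ∀ x y : ℤ, 0 < x → 0 < y → x ^ 2 - D * y ^ 2 = 1 →
        d * (d ^ 2 + 1) * (d ^ 2 + 3) / 2 ≤ y := by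
  subst hD
  obtain ⟨k, hk⟩ := hdodd
  set c : ℤ := 2 * k ^ 2 + 2 * k + 2 with hc
  have hcc : d ^ 2 + 3 = 2 * c := by rw [hc]; linear_combination (d + 2 * k + 1) * hk
  have hXdiv : d ^ 2 * (d ^ 2 + 3) ^ 2 / 2 = d ^ 2 * (d ^ 2 + 3) * c := by
    rw [show d ^ 2 * (d ^ 2 + 3) ^ 2 = 2 * (d ^ 2 * (d ^ 2 + 3) * c) by
      linear_combination d ^ 2 * (d ^ 2 + 3) * hcc]
    exact Int.mul_ediv_cancel_left _ two_ne_zero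
  have hYdiv : d * (d ^ 2 + 1) * (d ^ 2 + 3) / 2 = d * (d ^ 2 + 1) * c := by
    rw [show d * (d ^ 2 + 1) * (d ^ 2 + 3) = 2 * (d * (d ^ 2 + 1) * c) by
      linear_combination d * (d ^ 2 + 1) * hcc]
    exact Int.mul_ediv_cancel_left _ two_ne_zero
  rw [hXdiv, hYdiv]
  constructor
  · linear_combination (2 * d ^ 2 * c) * hcc
  · intro x y hx hy hxy
    have heq : (2 * x) ^ 2 - (d ^ 2 + 4) * (2 * y) ^ 2 = 4 ∨
        (2 * x) ^ 2 - (d ^ 2 + 4) * (2 * y) ^ 2 = -4 := by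
      left; linear_combination 4 * hxy
    have hkey := pell_key d hd ⟨k, hk⟩ (2 * y).toNat (2 * x) (2 * y)
      (by linarith) (by linarith) (Int.self_le_toNat _) heq
    have hYval : 2 * (d * (d ^ 2 + 1) * c) = d ^ 5 + 4 * d ^ 3 + 3 * d := by
      linear_combination (-(d * (d ^ 2 + 1))) * hcc
    rcases hkey with ⟨e1, e2⟩ | ⟨e1, e2⟩ | ⟨e1, e2⟩ | ⟨e1, e2⟩ | ⟨e1, e2⟩ | ⟨e1, e2⟩ | hbig
    · omega
    · omega
    · -- 2y = d odd
      omega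
    · -- pair with norm -4 : contradiction with +4 equation
      exfalso
      have : (4 : ℤ) = -4 := by
        linear_combination (2 * x + (d ^ 3 + 3 * d)) * e1 -
          (d ^ 2 + 4) * (2 * y + (d ^ 2 + 1)) * e2 - 4 * hxy
      omega
    · -- 2y = d³ + 2d odd
      exfalso
      have hodd : Odd (d ^ 3 + 2 * d) := (hdodd_aux d ⟨k, hk⟩).add_even ⟨d, by ring⟩
      rw [← e2] at hodd
      obtain ⟨m, hm⟩ := hodd
      omega
    · -- 2y = d⁴ + 3d² + 1 : pair with norm -4
      exfalso
      have : (4 : ℤ) = -4 := by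
        linear_combination (2 * x + (d ^ 5 + 5 * d ^ 3 + 5 * d)) * e1 -
          (d ^ 2 + 4) * (2 * y + (d ^ 4 + 3 * d ^ 2 + 1)) * e2 - 4 * hxy
      omega
    · linarith [hYval, hbig]
end
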